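/- arXiv:2303.17795 — 2 statements merged into one kernel-verified Lean document; each statement's English description precedes it below -/
import Mathlib

section
/- Let m ≥ 3 be an odd integer and let Γ be the non-commuting graph of the dihedral group D_{2m}. Then Γ has 2m − 1 vertices and 3m(m−1)/2 edges, the characteristic polynomial of its signless Laplacian matrix equals (x − m)^{m−2} · (x − (2m−3))^{m−1} · (x² − (4m−3)x + (2m² − 2m)), and the signless Laplacian energy of Γ equals 9/5 + √33 if m = 3, and equals (2m³ − 10m² + 12m − 3)/(2m − 1) + √(8m² − 16m + 9) if m ≥ 5. -/
open Matrix Polynomial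

noncomputable section

/-- The non-commuting graph of a group `G`: vertices are the non-central elements,
and two vertices are adjacent iff they do not commute. -/
def ncGraph (G : Type*) [Group G] : SimpleGraph {g : G // g ∉ Subgroup.center G} where
  Adj x y := (x : G) * (y : G) ≠ (y : G) * (x : G)
  symm := ⟨fun _ _ h h' => h h'.symm⟩
  loopless := ⟨fun _ h => h rfl⟩

instance ncGraph.fintypeVerts (G : Type*) [Group G] [Finite G] :
    Fintype {g : G // g ∉ Subgroup.center G} :=
  Fintype.ofFinite _

instance ncGraph.decidableAdj (G : Type*) [Group G] [DecidableEq G] :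
    DecidableRel (ncGraph G).Adj :=
  fun x y => inferInstanceAs (Decidable ((x : G) * (y : G) ≠ (y : G) * (x : G)))

/-- The signless Laplacian matrix `D + A` of a graph, over `ℝ`. -/
def signlessLap {V : Type*} [Fintype V] [DecidableEq V] (Γ : SimpleGraph V)
    [DecidableRel Γ.Adj] : Matrix V V ℝ :=
  Matrix.diagonal (fun v => (Γ.degree v : ℝ)) + Γ.adjMatrix ℝ

/-- Sum of `|γ - c|` over the eigenvalues `γ` (with multiplicity) of a real symmetric
matrix (junk value `0` if the matrix is not symmetric). -/
def eigAbsSum {V : Type*} [Fintype V] [DecidableEq V] (M : Matrix V V ℝ) (c : ℝ) : ℝ :=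
  letI := Classical.dec M.IsHermitian
  if h : M.IsHermitian then ∑ i, |h.eigenvalues i - c| else 0

/-- The energy of a graph: the sum of the absolute values of the adjacency eigenvalues. -/
def graphEnergy {V : Type*} [Fintype V] [DecidableEq V] (Γ : SimpleGraph V)
    [DecidableRel Γ.Adj] : ℝ :=
  eigAbsSum (Γ.adjMatrix ℝ) 0

/-- The average degree `2·(#edges)/(#vertices)` of a graph. -/
def avgDeg {V : Type*} [Fintype V] [DecidableEq V] (Γ : SimpleGraph V)
    [DecidableRel Γ.Adj] : ℝ :=
  2 * Γ.edgeFinset.card / Fintype.card V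

/-- The Laplacian energy of a graph. -/
def lapEnergy {V : Type*} [Fintype V] [DecidableEq V] (Γ : SimpleGraph V)
    [DecidableRel Γ.Adj] : ℝ :=
  eigAbsSum (Γ.lapMatrix ℝ) (avgDeg Γ)

/-- The signless Laplacian energy of a graph. -/
def slapEnergy {V : Type*} [Fintype V] [DecidableEq V] (Γ : SimpleGraph V)
    [DecidableRel Γ.Adj] : ℝ :=
  eigAbsSum (signlessLap Γ) (avgDeg Γ)


set_option maxHeartbeats 1000000
open DihedralGroup

variable {m : ℕ}

lemma two_ne_zero_zmod (hm : 3 ≤ m) : (2 : ZMod m) ≠ 0 := by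
  haveI : NeZero m := ⟨Nat.ne_of_gt (by omega)⟩
  intro h
  have := (ZMod.natCast_eq_zero_iff 2 m).mp (by exact_mod_cast h)
  exact absurd (Nat.le_of_dvd (by norm_num) this) (by omega)

lemma zmod_two_mul_eq_zero (hm : 3 ≤ m) (hodd : Odd m) {i : ZMod m} (h : i + i = 0) : i = 0 := by
  haveI : NeZero m := ⟨Nat.ne_of_gt (by omega)⟩
  have h2 : (2 : ZMod m) * i = 0 := by rw [two_mul]; exact h
  have hu : IsUnit (2 : ZMod m) := by
    rw [show ((2:ZMod m)) = ((2:ℕ):ZMod m) by norm_num]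
    rw [ZMod.isUnit_iff_coprime]
    exact Nat.coprime_two_left.mpr hodd
  exact (hu.mul_right_eq_zero).mp h2

lemma mem_center_iff_dih (hm : 3 ≤ m) (hodd : Odd m) (g : DihedralGroup m) :
    g ∈ Subgroup.center (DihedralGroup m) ↔ g = 1 := by
  constructor
  · intro hg
    rw [Subgroup.mem_center_iff] at hg
    cases g with
    | r i =>
      have := hg (sr 0)
      simp only [sr_mul_r, r_mul_sr, zero_add, zero_sub] at this
      have hi : i = 0 := by
        have h' : i = -i := by injection this
        apply zmod_two_mul_eq_zero hm hodd
        linear_combination h'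
      rw [hi]; rfl
    | sr i =>
      have := hg (r 1)
      simp only [r_mul_sr, sr_mul_r] at this
      have : i - 1 = i + 1 := by injection this
      have h2 : (2 : ZMod m) = 0 := by linear_combination -this
      exact absurd h2 (two_ne_zero_zmod hm)
  · rintro rfl; exact (Subgroup.center _).one_mem

abbrev VT (m : ℕ) := {g : DihedralGroup m // g ∉ Subgroup.center (DihedralGroup m)}
abbrev AT (m : ℕ) := {i : ZMod m // i ≠ 0}
abbrev IT (m : ℕ) := AT m ⊕ ZMod m

def vEquiv (hm : 3 ≤ m) (hodd : Odd m) : IT m ≃ VT m where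
  toFun x := match x with
    | Sum.inl a => ⟨r a.1, by
        rw [mem_center_iff_dih hm hodd]
        intro h
        exact a.2 (by injection h)⟩
    | Sum.inr i => ⟨sr i, by
        rw [mem_center_iff_dih hm hodd]
        intro h
        exact (by injection h : False)⟩
  invFun v := match v with
    | ⟨r i, h⟩ => Sum.inl ⟨i, fun h0 => h (by
        rw [mem_center_iff_dih hm hodd, h0]; rfl)⟩
    | ⟨sr i, _⟩ => Sum.inr i
  left_inv x := by rcases x with a | i <;> rfl
  right_inv v := by rcases v with ⟨g | g, h⟩ <;> rfl

lemma one_def' : (1 : DihedralGroup m) = r 0 := rfl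

section Graph
variable (hm : 3 ≤ m) (hodd : Odd m)

lemma adj_iff (x y : IT m) :
    (ncGraph (DihedralGroup m)).Adj (vEquiv hm hodd x) (vEquiv hm hodd y) ↔
      (match x, y with
        | Sum.inl _, Sum.inl _ => False
        | Sum.inl _, Sum.inr _ => True
        | Sum.inr _, Sum.inl _ => True
        | Sum.inr i, Sum.inr j => i ≠ j) := by
  rcases x with a | i <;> rcases y with b | j <;>
    simp only [ncGraph, vEquiv, Equiv.coe_fn_mk, r_mul_r, r_mul_sr, sr_mul_r, sr_mul_sr]
  · simp [add_comm]
  · simp only [ne_eq, sr.injEq, iff_true]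
    intro h
    exact a.2 (zmod_two_mul_eq_zero hm hodd (by linear_combination -h))
  · simp only [ne_eq, sr.injEq, iff_true]
    intro h
    exact b.2 (zmod_two_mul_eq_zero hm hodd (by linear_combination h))
  · simp only [ne_eq, r.injEq]
    constructor
    · intro h hij; exact h (by rw [hij])
    · intro h hc; exact h (by
        have := zmod_two_mul_eq_zero hm hodd (i := j - i) (by linear_combination hc)
        linear_combination -this)
end Graph




variable {α : Type*} [Fintype α] [DecidableEq α]

lemma sum_decomp (f : α → ℝ) (u v w : α) (c1 c2 c3 c4 : ℝ)
    (h : ∀ b, f b = c1 * (if b = u then 1 else 0) + c2 * (if b = v then 1 else 0)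
      + c3 * (if b = w then 1 else 0) + c4) :
    ∑ b, f b = c1 + c2 + c3 + c4 * (Fintype.card α) := by
  rw [Finset.sum_congr rfl (fun b _ => h b)]
  rw [Finset.sum_add_distrib, Finset.sum_add_distrib, Finset.sum_add_distrib,
    ← Finset.mul_sum, ← Finset.mul_sum, ← Finset.mul_sum,
    Finset.sum_ite_eq' Finset.univ u (fun _ => (1:ℝ)),
    Finset.sum_ite_eq' Finset.univ v (fun _ => (1:ℝ)),
    Finset.sum_ite_eq' Finset.univ w (fun _ => (1:ℝ)),
    Finset.sum_const, Finset.card_univ]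
  simp [mul_comm]

def P1 (p : α) : Matrix α α ℝ := fun a b =>
  if b = p then 1 else if a = b then 1 else if a = p then -1 else 0

def P2 (p : α) : Matrix α α ℝ := fun a b =>
  if a = p then 1 / (Fintype.card α : ℝ) else (if a = b then 1 else 0) - 1 / (Fintype.card α : ℝ)

lemma P1_colsum (p c : α) : ∑ b, P1 p b c = if c = p then (Fintype.card α : ℝ) else 0 := by
  rw [sum_decomp (fun b => P1 p b c) c p p
    (if c = p then 0 else 1) (if c = p then 0 else -1) 0 (if c = p then 1 else 0) ?_]
  · by_cases hc : c = p <;> simp [hc]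
  · intro b
    unfold P1
    by_cases hc : c = p <;> by_cases hb : b = p <;> by_cases hbc : b = c <;>
      simp_all <;> ring

lemma card_ne_zero_of_mem (p : α) : ((Fintype.card α : ℝ)) ≠ 0 := by
  have : 0 < Fintype.card α := Fintype.card_pos_iff.mpr ⟨p⟩
  exact_mod_cast this.ne'


variable (p : α)

lemma P1_mul_P2 : P1 p * P2 p = 1 := by
  have hn : ((Fintype.card α : ℝ)) ≠ 0 := card_ne_zero_of_mem p
  ext a c
  rw [Matrix.mul_apply, Matrix.one_apply]
  by_cases ha : a = p
  · by_cases hc : c = p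
    · rw [sum_decomp _ p p p 0 0 0 (1/(Fintype.card α : ℝ))
        (by intro b; unfold P1 P2; by_cases hbp : b = p <;> by_cases hbc : b = c <;>
          simp_all [eq_comm] <;> (try field_simp) <;> (try ring) <;> simp_all)]
      simp only [ha, hc, if_pos rfl]
      field_simp; norm_num
    · rw [sum_decomp _ c p p (-1) 0 0 (1/(Fintype.card α : ℝ))
        (by intro b; unfold P1 P2; by_cases hbp : b = p <;> by_cases hbc : b = c <;>
          simp_all [eq_comm] <;> (try field_simp) <;> (try ring) <;> simp_all)]
      rw [if_neg (by rw [ha]; exact Ne.symm hc)]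
      field_simp; norm_num
  · rw [sum_decomp _ p a a (1/(Fintype.card α : ℝ))
        ((if a = c then 1 else 0) - 1/(Fintype.card α : ℝ)) 0 0
        (by intro b; unfold P1 P2; by_cases hbp : b = p <;> by_cases hba : b = a <;>
          by_cases hbc : b = c <;> simp_all [eq_comm] <;> (try field_simp) <;> (try ring) <;> simp_all)]
    ring

lemma P2_mul_P1 : P2 p * P1 p = 1 := by
  have hn : ((Fintype.card α : ℝ)) ≠ 0 := card_ne_zero_of_mem p
  ext a c
  rw [Matrix.mul_apply, Matrix.one_apply]
  by_cases ha : a = p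
  · by_cases hc : c = p
    · rw [sum_decomp _ p p p 0 0 0 (1/(Fintype.card α : ℝ))
        (by intro b; unfold P1 P2; by_cases hbp : b = p <;> by_cases hbc : b = c <;>
          simp_all [eq_comm] <;> (try field_simp) <;> (try ring) <;> simp_all)]
      simp only [ha, hc, if_pos rfl]
      field_simp; norm_num
    · rw [sum_decomp _ c p p (1/(Fintype.card α : ℝ)) (-(1/(Fintype.card α : ℝ))) 0 0
        (by intro b; unfold P1 P2; by_cases hbp : b = p <;> by_cases hbc : b = c <;>
          simp_all [eq_comm] <;> (try field_simp) <;> (try ring) <;> simp_all)]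
      rw [if_neg (by rw [ha]; exact Ne.symm hc)]
      ring
  · by_cases hc : c = p
    · rw [sum_decomp _ a p p 1 0 0 (-(1/(Fintype.card α : ℝ)))
        (by intro b; unfold P1 P2; by_cases hbp : b = p <;> by_cases hba : b = a <;>
          simp_all [hc, eq_comm] <;> (try field_simp) <;> (try ring) <;> simp_all)]
      rw [if_neg (fun h => ha (h.trans hc))]
      field_simp; norm_num
    · rw [sum_decomp _ a c p (if a = c then 1 else 0) (-(1/(Fintype.card α : ℝ)))
        (1/(Fintype.card α : ℝ)) 0
        (by intro b; unfold P1 P2; by_cases hbp : b = p <;> by_cases hba : b = a <;>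
          by_cases hbc : b = c <;> simp_all [eq_comm] <;> (try field_simp) <;> (try ring) <;> simp_all)]
      ring



-- aux 1: similarity invariance of charpoly
lemma charpoly_conj_aux {n : Type*} [DecidableEq n] [Fintype n] {R : Type*} [CommRing R]
    (S A W : Matrix n n R) (h1 : S * W = 1) (h2 : W * S = 1) :
    (S * A * W).charpoly = A.charpoly := by
  unfold Matrix.charpoly
  have key : charmatrix (S * A * W) = S.map C * charmatrix A * W.map C := by
    rw [charmatrix, charmatrix]
    have hs : (Matrix.scalar n (X : R[X])) * W.map C = W.map C * Matrix.scalar n (X : R[X]) :=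
      (Matrix.scalar_commute X (fun r => Commute.all _ _) _)
    simp only [mul_sub, sub_mul, RingHom.mapMatrix_apply]
    rw [mul_assoc (S.map C), hs, ← mul_assoc (S.map C), ← Matrix.map_mul, h1, Matrix.map_one _ (map_zero C) (map_one C), one_mul, ← Matrix.map_mul, ← Matrix.map_mul]
  rw [key, det_mul, det_mul, mul_comm, ← mul_assoc, ← det_mul, ← Matrix.map_mul, h2,
    Matrix.map_one _ (map_zero C) (map_one C), det_one, one_mul]

lemma charpoly_diagonal_aux {n : Type*} [DecidableEq n] [Fintype n] {R : Type*} [CommRing R]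
    (d : n → R) : (Matrix.diagonal d).charpoly = ∏ i, (X - C (d i)) := by
  unfold Matrix.charpoly
  have : charmatrix (Matrix.diagonal d) = Matrix.diagonal (fun i => X - C (d i)) := by
    ext i j
    by_cases h : i = j
    · subst h; simp [charmatrix_apply_eq]
    · simp [charmatrix_apply_ne _ _ _ h, Matrix.diagonal_apply_ne _ h, h]
  rw [this, det_diagonal]

lemma herm_charpoly {n : Type*} [DecidableEq n] [Fintype n] {A : Matrix n n ℝ}
    (hA : A.IsHermitian) : A.charpoly = ∏ i, (X - C (hA.eigenvalues i)) := by
  have hU1 : (hA.eigenvectorUnitary : Matrix n n ℝ) * star (hA.eigenvectorUnitary : Matrix n n ℝ) = 1 := by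
    simpa [Matrix.mem_unitaryGroup_iff] using hA.eigenvectorUnitary.2
  have hU2 : star (hA.eigenvectorUnitary : Matrix n n ℝ) * (hA.eigenvectorUnitary : Matrix n n ℝ) = 1 := by
    simpa [Matrix.mem_unitaryGroup_iff'] using hA.eigenvectorUnitary.2
  conv_lhs => rw [hA.spectral_theorem, Unitary.conjStarAlgAut_apply]
  rw [charpoly_conj_aux _ _ _ hU1 hU2]
  rw [show (RCLike.ofReal ∘ hA.eigenvalues : n → ℝ) = hA.eigenvalues by ext i; simp,
    charpoly_diagonal_aux]


def Qc (m : ℕ) : Matrix (IT m) (IT m) ℝ := fun x y => match x, y with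
  | Sum.inl a, Sum.inl b => if a = b then (m : ℝ) else 0
  | Sum.inl _, Sum.inr _ => 1
  | Sum.inr _, Sum.inl _ => 1
  | Sum.inr i, Sum.inr j => if i = j then 2 * (m : ℝ) - 2 else 1

variable {m : ℕ} [NeZero m]

def JAB (m : ℕ) : Matrix (AT m) (ZMod m) ℝ := fun _ _ => 1
def JBA (m : ℕ) : Matrix (ZMod m) (AT m) ℝ := fun _ _ => 1
def QB (m : ℕ) : Matrix (ZMod m) (ZMod m) ℝ := fun i j => if i = j then 2 * (m:ℝ) - 2 else 1

def i0 (hm : 3 ≤ m) : AT m := ⟨1, by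
  intro h
  haveI : NeZero m := ⟨Nat.ne_of_gt (by omega)⟩
  have : ((1:ℕ) : ZMod m) = 0 := by exact_mod_cast h
  have := (ZMod.natCast_eq_zero_iff 1 m).mp this
  have := Nat.le_of_dvd (by norm_num) this
  omega⟩

def SM (hm : 3 ≤ m) : Matrix (IT m) (IT m) ℝ :=
  Matrix.fromBlocks (P1 (i0 hm)) 0 0 (P1 (0 : ZMod m))

def RM (hm : 3 ≤ m) : Matrix (IT m) (IT m) ℝ :=
  Matrix.fromBlocks (P2 (i0 hm)) 0 0 (P2 (0 : ZMod m))

def TAB (hm : 3 ≤ m) : Matrix (AT m) (ZMod m) ℝ :=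
  fun a j => if a = i0 hm ∧ j = 0 then (m : ℝ) else 0

def TBA (hm : 3 ≤ m) : Matrix (ZMod m) (AT m) ℝ :=
  fun i b => if i = 0 ∧ b = i0 hm then (m : ℝ) - 1 else 0

def TB (m : ℕ) : Matrix (ZMod m) (ZMod m) ℝ :=
  fun i j => if i = j then (if i = 0 then 3 * (m:ℝ) - 3 else 2 * (m:ℝ) - 3) else 0

def TM (hm : 3 ≤ m) : Matrix (IT m) (IT m) ℝ :=
  Matrix.fromBlocks ((m:ℝ) • 1) (TAB hm) (TBA hm) (TB m)

lemma card_AT' [NeZero m] (hm : 3 ≤ m) : Fintype.card (AT m) = m - 1 := by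
  have : Fintype.card (AT m) = Fintype.card (ZMod m) - 1 := by
    simpa using Fintype.card_subtype_compl (fun i : ZMod m => i = 0)
  rw [this, ZMod.card]

lemma Qc_blocks : Qc m = Matrix.fromBlocks
    ((m:ℝ) • (1 : Matrix (AT m) (AT m) ℝ)) (JAB m) (JBA m) (QB m) := by
  ext x y
  rcases x with a | i <;> rcases y with b | j <;>
    simp [Qc, JAB, JBA, QB, Matrix.fromBlocks, Matrix.one_apply, Matrix.smul_apply, mul_ite,
      mul_zero, mul_one]

section Blocks
variable (hm : 3 ≤ m)

lemma SM_mul_RM : SM hm * RM hm = 1 := by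
  rw [SM, RM, Matrix.fromBlocks_multiply]
  simp [P1_mul_P2, Matrix.fromBlocks_one]

lemma RM_mul_SM : RM hm * SM hm = 1 := by
  rw [SM, RM, Matrix.fromBlocks_multiply]
  simp [P2_mul_P1, Matrix.fromBlocks_one]

lemma block12 : JAB m * P1 (0 : ZMod m) = P1 (i0 hm) * TAB hm := by
  ext a j
  rw [Matrix.mul_apply, Matrix.mul_apply]
  have hL : ∀ i : ZMod m, JAB m a i * P1 0 i j = P1 0 i j := by
    intro i; simp [JAB]
  rw [Finset.sum_congr rfl (fun i _ => hL i), P1_colsum, ZMod.card]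
  have hR : ∀ b : AT m, P1 (i0 hm) a b * TAB hm b j
      = if b = i0 hm then (if j = 0 then (m:ℝ) else 0) else 0 := by
    intro b
    unfold TAB
    by_cases hb : b = i0 hm <;> by_cases hj : j = 0 <;> simp [hb, hj, P1]
  rw [Finset.sum_congr rfl (fun b _ => hR b), Finset.sum_ite_eq' Finset.univ (i0 hm)]
  simp

lemma block21 : JBA m * P1 (i0 hm) = P1 (0 : ZMod m) * TBA hm := by
  ext i b
  rw [Matrix.mul_apply, Matrix.mul_apply]
  have hL : ∀ a : AT m, JBA m i a * P1 (i0 hm) a b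
      = P1 (i0 hm) a b := by intro a; simp [JBA]
  rw [Finset.sum_congr rfl (fun a _ => hL a), P1_colsum, card_AT' hm]
  have hR : ∀ k : ZMod m, P1 (0 : ZMod m) i k * TBA hm k b
      = if k = (0:ZMod m) then (if b = i0 hm then (m:ℝ) - 1 else 0) else 0 := by
    intro k
    unfold TBA
    by_cases hk : k = (0:ZMod m) <;> by_cases hb : b = i0 hm <;> simp [hk, hb, P1]
  rw [Finset.sum_congr rfl (fun k _ => hR k), Finset.sum_ite_eq' Finset.univ (0 : ZMod m)]
  have hcast : ((m - 1 : ℕ) : ℝ) = (m:ℝ) - 1 := by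
    have : 1 ≤ m := by omega
    push_cast [Nat.cast_sub this]
    ring
  simp [hcast]

lemma block22 : QB m * P1 (0 : ZMod m)
    = P1 (0 : ZMod m) * TB m := by
  ext i j
  rw [Matrix.mul_apply, Matrix.mul_apply]
  have hL : ∀ k : ZMod m,
      QB m i k * P1 (0:ZMod m) k j
      = (2*(m:ℝ)-3) * (if k = i then 1 else 0) * P1 (0:ZMod m) k j + P1 (0:ZMod m) k j := by
    intro k
    unfold QB
    by_cases hk : i = k <;> simp [hk, eq_comm] <;> ring
  rw [Finset.sum_congr rfl (fun k _ => hL k), Finset.sum_add_distrib, P1_colsum, ZMod.card]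
  have : ∀ k : ZMod m, (2*(m:ℝ)-3) * (if k = i then 1 else 0) * P1 (0:ZMod m) k j
      = if k = i then (2*(m:ℝ)-3) * P1 (0:ZMod m) k j else 0 := by
    intro k; by_cases hk : k = i <;> simp [hk]
  rw [Finset.sum_congr rfl (fun k _ => this k), Finset.sum_ite_eq' Finset.univ i]
  have hR : ∀ k : ZMod m, P1 (0:ZMod m) i k * TB m k j
      = if k = j then P1 (0:ZMod m) i j * (if j = 0 then 3*(m:ℝ)-3 else 2*(m:ℝ)-3) else 0 := by
    intro k
    unfold TB
    by_cases hk : k = j <;> simp [hk, eq_comm]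
  rw [Finset.sum_congr rfl (fun k _ => hR k), Finset.sum_ite_eq' Finset.univ j]
  simp only [Finset.mem_univ, if_true]
  by_cases hj : j = 0
  · subst hj
    have h1 : P1 (0:ZMod m) i 0 = 1 := by simp [P1]
    simp [h1]
    ring
  · simp [hj]
    ring

lemma Qc_mul_SM : Qc m * SM hm = SM hm * TM hm := by
  rw [Qc_blocks, SM, TM, Matrix.fromBlocks_multiply, Matrix.fromBlocks_multiply]
  simp only [Matrix.mul_zero, Matrix.zero_mul, add_zero, zero_add, Matrix.smul_mul,
    Matrix.mul_smul, Matrix.one_mul, Matrix.mul_one, block12 hm, block21 hm,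
    block22 (m := m), smul_zero]

lemma charpoly_Qc_eq_TM : (Qc m).charpoly = (TM hm).charpoly := by
  have : Qc m = SM hm * TM hm * RM hm := by
    calc Qc m = Qc m * (SM hm * RM hm) := by rw [SM_mul_RM]; rw [Matrix.mul_one]
    _ = (Qc m * SM hm) * RM hm := by rw [Matrix.mul_assoc]
    _ = SM hm * TM hm * RM hm := by rw [Qc_mul_SM]
  rw [this, charpoly_conj_aux _ _ _ (SM_mul_RM hm) (RM_mul_SM hm)]
end Blocks

section CharT
variable (hm : 3 ≤ m) [NeZero m]

def Ppred (hm : 3 ≤ m) : IT m → Prop :=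
  fun x => x = Sum.inl (i0 hm) ∨ x = Sum.inr (0 : ZMod m)

instance : DecidablePred (Ppred (m := m) hm) := fun x => by unfold Ppred; infer_instance

def dval (m : ℕ) : IT m → ℝ := fun x => match x with
  | Sum.inl _ => (m : ℝ)
  | Sum.inr _ => 2 * (m : ℝ) - 3

def T2 (hm : 3 ≤ m) : Matrix {x : IT m // Ppred hm x} {x : IT m // Ppred hm x} ℝ :=
  fun u v => TM hm u.1 v.1

lemma TM_reindex :
    (Matrix.reindex (Equiv.sumCompl (Ppred hm)).symm (Equiv.sumCompl (Ppred hm)).symm) (TM hm)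
    = Matrix.fromBlocks (T2 hm) 0 0 (Matrix.diagonal (fun w : {x : IT m // ¬ Ppred hm x} => dval m w.1)) := by
  ext x y
  rcases x with u | w <;> rcases y with v | w'
  · simp [T2, Equiv.sumCompl_apply_inl]
  · have hw := w'.2
    unfold Ppred at hw
    push_neg at hw
    rcases u.2 with hu | hu <;>
      rcases hw' : w'.1 with a | j <;>
      simp only [Matrix.reindex_apply, Matrix.submatrix_apply, Equiv.symm_symm,
        Equiv.sumCompl_apply_inl, Equiv.sumCompl_apply_inr, hu, hw',
        Matrix.fromBlocks_apply₁₂, Matrix.zero_apply, TM, Matrix.fromBlocks_apply₁₁,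
        Matrix.fromBlocks_apply₂₁, Matrix.fromBlocks_apply₂₂, TAB, TBA, TB] <;>
      rw [hw'] at hw
    · have : a ≠ i0 hm := fun h => hw.1 (by rw [h])
      simp [Matrix.one_apply, Ne.symm this]
    · have : j ≠ 0 := fun h => hw.2 (by rw [h])
      simp [this]
    · have : a ≠ i0 hm := fun h => hw.1 (by rw [h])
      simp [this]
    · have : j ≠ 0 := fun h => hw.2 (by rw [h])
      simp [Ne.symm this]
  · have hw := w.2
    unfold Ppred at hw
    push_neg at hw
    rcases v.2 with hv | hv <;>
      rcases hw' : w.1 with a | j <;>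
      simp only [Matrix.reindex_apply, Matrix.submatrix_apply, Equiv.symm_symm,
        Equiv.sumCompl_apply_inl, Equiv.sumCompl_apply_inr, hv, hw',
        Matrix.fromBlocks_apply₂₁, Matrix.zero_apply, TM, Matrix.fromBlocks_apply₁₁,
        Matrix.fromBlocks_apply₁₂, Matrix.fromBlocks_apply₂₂, TAB, TBA, TB] <;>
      rw [hw'] at hw
    · have : a ≠ i0 hm := fun h => hw.1 (by rw [h])
      simp [Matrix.one_apply, this]
    · have : j ≠ 0 := fun h => hw.2 (by rw [h])
      simp [this]
    · have : a ≠ i0 hm := fun h => hw.1 (by rw [h])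
      simp [this]
    · have : j ≠ 0 := fun h => hw.2 (by rw [h])
      simp [this]
  · simp only [Matrix.reindex_apply, Matrix.submatrix_apply, Equiv.symm_symm,
      Equiv.sumCompl_apply_inr, Matrix.fromBlocks_apply₂₂]
    by_cases hww : w = w'
    · subst hww
      rw [Matrix.diagonal_apply_eq]
      rcases hw' : w.1 with a | j
      · simp [TM, dval, hw', Matrix.one_apply]
      · have hw := w.2
        unfold Ppred at hw
        push_neg at hw
        rw [hw'] at hw
        have : j ≠ 0 := fun h => hw.2 (by rw [h])
        simp [TM, dval, hw', TB, this]
    · rw [Matrix.diagonal_apply_ne _ hww]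
      have hne : w.1 ≠ w'.1 := fun h => hww (Subtype.ext h)
      have hw := w.2; have hw2 := w'.2
      unfold Ppred at hw hw2
      push_neg at hw hw2
      rcases hwa : w.1 with a | i <;> rcases hwb : w'.1 with b | j <;>
        rw [hwa] at hne hw <;> rw [hwb] at hne hw2 <;>
        simp only [TM, Matrix.fromBlocks_apply₁₁, Matrix.fromBlocks_apply₁₂,
          Matrix.fromBlocks_apply₂₁, Matrix.fromBlocks_apply₂₂, TAB, TBA, TB,
          Matrix.smul_apply, Matrix.one_apply]
      · have : a ≠ b := fun h => hne (by rw [h])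
        simp [this]
      · have : a ≠ i0 hm := fun h => hw.1 (by rw [h])
        simp [this]
      · have : b ≠ i0 hm := fun h => hw2.1 (by rw [h])
        simp [this]
      · have : i ≠ j := fun h => hne (by rw [h])
        simp [this]
end CharT

lemma prod_ite_base {α : Type*} [Fintype α] [DecidableEq α] {R : Type*} [CommMonoid R]
    (p : α) (c : R) : (∏ a : α, if a = p then 1 else c) = c ^ (Fintype.card α - 1) := by
  rw [← Finset.mul_prod_erase _ _ (Finset.mem_univ p), if_pos rfl, one_mul]
  rw [Finset.prod_congr rfl (fun x hx => if_neg (Finset.ne_of_mem_erase hx)),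
    Finset.prod_const, Finset.card_erase_of_mem (Finset.mem_univ p), Finset.card_univ]

section CharT2
variable (hm : 3 ≤ m) [NeZero m]

def e2 (hm : 3 ≤ m) : Fin 2 ≃ {x : IT m // Ppred hm x} where
  toFun i := if i = 0 then ⟨Sum.inl (i0 hm), Or.inl rfl⟩ else ⟨Sum.inr 0, Or.inr rfl⟩
  invFun u := if u.1 = Sum.inl (i0 hm) then 0 else 1
  left_inv i := by fin_cases i <;> simp
  right_inv u := by
    rcases hu : u.1 with a | j
    · rcases u.2 with h | h
      · have : a = i0 hm := by rw [hu] at h; exact Sum.inl.inj h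
        subst this
        simp [hu]
        exact Subtype.ext hu.symm
      · rw [hu] at h; exact absurd h (by simp)
    · rcases u.2 with h | h
      · rw [hu] at h; exact absurd h (by simp)
      · have : j = 0 := by rw [hu] at h; exact Sum.inr.inj h
        subst this
        have : u.1 ≠ Sum.inl (i0 hm) := by rw [hu]; simp
        simp [this]
        exact Subtype.ext hu.symm

lemma T2_reindex : (Matrix.reindex (e2 hm).symm (e2 hm).symm) (T2 hm)
    = !![(m:ℝ), (m:ℝ); (m:ℝ) - 1, 3*(m:ℝ) - 3] := by
  ext i j
  fin_cases i <;> fin_cases j <;>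
    simp [e2, T2, TM, TAB, TBA, TB, Matrix.one_apply]

lemma charpoly_fin_two' (M : Matrix (Fin 2) (Fin 2) ℝ) :
    M.charpoly = X^2 - C (M 0 0 + M 1 1) * X + C (M 0 0 * M 1 1 - M 0 1 * M 1 0) := by
  rw [Matrix.charpoly, Matrix.det_fin_two]
  simp only [charmatrix_apply_eq, charmatrix_apply_ne _ _ _ (by decide : (0 : Fin 2) ≠ 1),
    charmatrix_apply_ne _ _ _ (by decide : (1 : Fin 2) ≠ 0), map_add, _root_.map_mul, map_sub]
  ring

lemma charpoly_T2 : (T2 hm).charpoly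
    = X^2 - C (4*(m:ℝ) - 3) * X + C (2*(m:ℝ)^2 - 2*(m:ℝ)) := by
  rw [← Matrix.charpoly_reindex (e2 hm).symm (T2 hm), T2_reindex, charpoly_fin_two']
  have h00 : !![(m:ℝ), (m:ℝ); (m:ℝ) - 1, 3*(m:ℝ) - 3] 0 0 = (m:ℝ) := by norm_num
  have h01 : !![(m:ℝ), (m:ℝ); (m:ℝ) - 1, 3*(m:ℝ) - 3] 0 1 = (m:ℝ) := by norm_num
  have h10 : !![(m:ℝ), (m:ℝ); (m:ℝ) - 1, 3*(m:ℝ) - 3] 1 0 = (m:ℝ) - 1 := by norm_num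
  have h11 : !![(m:ℝ), (m:ℝ); (m:ℝ) - 1, 3*(m:ℝ) - 3] 1 1 = 3*(m:ℝ) - 3 := by norm_num
  rw [h00, h01, h10, h11,
    show (m:ℝ) + (3*(m:ℝ) - 3) = 4*(m:ℝ) - 3 from by ring,
    show (m:ℝ) * (3*(m:ℝ) - 3) - (m:ℝ) * ((m:ℝ) - 1) = 2*(m:ℝ)^2 - 2*(m:ℝ) from by ring]

lemma card_compl_P : Fintype.card {x : IT m // ¬ Ppred hm x} = 2 * m - 3 := by
  have h1 : Fintype.card {x : IT m // Ppred hm x} = 2 := by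
    rw [← Fintype.card_fin 2]
    exact (Fintype.card_congr (e2 hm)).symm
  have h2 : Fintype.card (IT m) = 2 * m - 1 := by
    simp [card_AT' hm, ZMod.card]
    omega
  have := Fintype.card_subtype_compl (Ppred hm)
  rw [this, h1, h2]
  omega

lemma charpoly_diag_part :
    (Matrix.diagonal (fun w : {x : IT m // ¬ Ppred hm x} => dval m w.1)).charpoly
    = (X - C (m:ℝ))^(m-2) * (X - C (2*(m:ℝ)-3))^(m-1) := by
  rw [charpoly_diagonal_aux]
  have hsub : (∏ w : {x : IT m // ¬ Ppred hm x}, (X - C (dval m w.1)))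
      = ∏ x ∈ Finset.univ.filter (fun x : IT m => ¬ Ppred hm x), (X - C (dval m x)) := by
    exact (Finset.prod_subtype (Finset.univ.filter (fun x : IT m => ¬ Ppred hm x)) (fun x => by simp) (fun x => X - C (dval m x))).symm
  rw [hsub, Finset.prod_filter, Fintype.prod_sum_type]
  have hA : ∀ a : AT m, (if ¬ Ppred hm (Sum.inl a) then X - C (dval m (Sum.inl a)) else 1)
      = if a = i0 hm then 1 else X - C (m:ℝ) := by
    intro a
    unfold Ppred dval
    by_cases ha : a = i0 hm <;> simp [ha]
  have hB : ∀ j : ZMod m, (if ¬ Ppred hm (Sum.inr j) then X - C (dval m (Sum.inr j)) else 1)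
      = if j = (0 : ZMod m) then 1 else X - C (2*(m:ℝ)-3) := by
    intro j
    unfold Ppred dval
    by_cases hj : j = 0 <;> simp [hj]
  rw [Finset.prod_congr rfl (fun a _ => hA a), Finset.prod_congr rfl (fun j _ => hB j),
    prod_ite_base, prod_ite_base, card_AT' hm, ZMod.card,
    show m - 1 - 1 = m - 2 from by omega]

lemma charpoly_TM : (TM hm).charpoly
    = (X - C (m:ℝ))^(m-2) * (X - C (2*(m:ℝ)-3))^(m-1)
      * (X^2 - C (4*(m:ℝ) - 3) * X + C (2*(m:ℝ)^2 - 2*(m:ℝ))) := by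
  rw [← Matrix.charpoly_reindex (Equiv.sumCompl (Ppred hm)).symm (TM hm), TM_reindex,
    Matrix.charpoly_fromBlocks_zero₂₁, charpoly_T2, charpoly_diag_part]
  ring
end CharT2


lemma card_AT [NeZero m] : Fintype.card (AT m) = m - 1 := by
  have : Fintype.card (AT m) = Fintype.card (ZMod m) - 1 := by
    simpa using Fintype.card_subtype_compl (fun i : ZMod m => i = 0)
  rw [this, ZMod.card]

section Graph2
variable (hm : 3 ≤ m) (hodd : Odd m) [NeZero m]

local notation "G" => ncGraph (DihedralGroup m)
local notation "e" => vEquiv hm hodd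

include hm hodd

lemma adj_ll (a b : AT m) : ¬ (G).Adj ((e) (Sum.inl a)) ((e) (Sum.inl b)) := by
  rw [adj_iff hm hodd]; exact not_false

lemma adj_lr (a : AT m) (j : ZMod m) : (G).Adj ((e) (Sum.inl a)) ((e) (Sum.inr j)) := by
  rw [adj_iff hm hodd]; trivial

lemma adj_rl (i : ZMod m) (b : AT m) : (G).Adj ((e) (Sum.inr i)) ((e) (Sum.inl b)) := by
  rw [adj_iff hm hodd]; trivial

lemma adj_rr' (i j : ZMod m) : (G).Adj ((e) (Sum.inr i)) ((e) (Sum.inr j)) ↔ i ≠ j := by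
  rw [adj_iff hm hodd]

lemma card_VT : Fintype.card (VT m) = 2 * m - 1 := by
  rw [← Fintype.card_congr (vEquiv hm hodd)]
  have h3 := hm
  simp [card_AT, ZMod.card]
  omega

lemma degree_eq (x : IT m) :
    (G).degree ((e) x) = match x with | Sum.inl _ => m | Sum.inr _ => 2 * m - 2 := by
  classical
  have hdeg : ∀ v : VT m, (G).degree v = ∑ y : IT m, if (G).Adj v ((e) y) then 1 else 0 := by
    intro v
    rw [SimpleGraph.degree, SimpleGraph.neighborFinset_eq_filter, Finset.card_filter]
    exact (Equiv.sum_comp (e) (fun w => if (G).Adj v w then 1 else 0)).symm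
  rw [hdeg, Fintype.sum_sum_type]
  rcases x with a | i
  · simp only [adj_ll hm hodd, if_false, Finset.sum_const_zero, adj_lr hm hodd, if_true,
      Finset.sum_const, Finset.card_univ, smul_eq_mul, mul_one, zero_add, ZMod.card]
  · simp only [adj_rl hm hodd, if_true, adj_rr' hm hodd, Finset.sum_const, Finset.card_univ,
      smul_eq_mul, mul_one, card_AT]
    have : (∑ j : ZMod m, if i ≠ j then 1 else 0) = m - 1 := by
      rw [Finset.sum_ite, Finset.sum_const, Finset.sum_const]
      simp only [smul_eq_mul, mul_one, mul_zero, add_zero]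
      have : Finset.univ.filter (fun j : ZMod m => i ≠ j) = Finset.univ.erase i := by
        ext j; simp [ne_comm, eq_comm, and_comm]
      rw [this, Finset.card_erase_of_mem (Finset.mem_univ i), Finset.card_univ, ZMod.card]
    rw [this]
    omega

lemma edge_count : 2 * (ncGraph (DihedralGroup m)).edgeFinset.card = 3 * m * (m - 1) := by
  classical
  have h := SimpleGraph.sum_degrees_eq_twice_card_edges (G)
  rw [← h, ← Equiv.sum_comp (e) (fun v => (G).degree v), Fintype.sum_sum_type]
  simp only [degree_eq hm hodd]
  rw [Finset.sum_const, Finset.sum_const, Finset.card_univ, Finset.card_univ, card_AT, ZMod.card]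
  simp only [smul_eq_mul]
  obtain ⟨k, rfl⟩ : ∃ k, m = k + 1 := ⟨m - 1, by omega⟩
  simp only [Nat.add_sub_cancel]
  have : 2 * (k + 1) - 2 = 2 * k := by omega
  rw [this]; ring

lemma slap_eq : signlessLap (ncGraph (DihedralGroup m)) =
    (Qc m).submatrix ((e).symm) ((e).symm) := by
  classical
  have key : ∀ x y : IT m, signlessLap (G) ((e) x) ((e) y) = Qc m x y := by
    intro x y
    rcases x with a | i <;> rcases y with b | j <;>
      simp only [signlessLap, Matrix.add_apply, Matrix.diagonal_apply, SimpleGraph.adjMatrix_apply,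
        Qc, EmbeddingLike.apply_eq_iff_eq]
    · by_cases h : a = b
      · subst h
        simp [adj_ll hm hodd, degree_eq hm hodd]
      · simp [h, fun hc => h (Sum.inl.inj hc), adj_ll hm hodd]
    · simp [adj_lr hm hodd]
    · simp [adj_rl hm hodd]
    · by_cases h : i = j
      · subst h
        have hd := degree_eq hm hodd (Sum.inr i)
        simp only [hd, adj_rr' hm hodd]
        have : ((2 * m - 2 : ℕ) : ℝ) = 2 * (m : ℝ) - 2 := by
          have : 2 ≤ 2 * m := by omega
          push_cast [Nat.cast_sub this]
          ring
        simp [this]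
      · simp [h, fun hc => h (Sum.inr.inj hc), adj_rr' hm hodd, h]
  ext v w
  rw [Matrix.submatrix_apply]
  conv_lhs => rw [← Equiv.apply_symm_apply (e) v, ← Equiv.apply_symm_apply (e) w]
  exact key _ _
end Graph2


lemma eigsum_of_charpoly {n : Type*} [Fintype n] [DecidableEq n] {A : Matrix n n ℝ}
    (hA : A.IsHermitian) (hherm : A.charpoly = ∏ i, (X - C (hA.eigenvalues i)))
    (ν : Multiset ℝ)
    (h : A.charpoly = (ν.map (fun a => X - C a)).prod) (c : ℝ) :
    ∑ i, |hA.eigenvalues i - c| = (ν.map (fun x => |x - c|)).sum := by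
  have hμ : Finset.univ.val.map hA.eigenvalues = ν := by
    have h1 : ((Finset.univ.val.map hA.eigenvalues).map (fun a => X - C a)).prod
        = (ν.map (fun a => X - C a)).prod := by
      rw [Multiset.map_map]
      simp only [Function.comp]
      rw [← Finset.prod_eq_multiset_prod, ← hherm, h]
    have := congrArg Polynomial.roots h1
    rwa [Polynomial.roots_multiset_prod_X_sub_C, Polynomial.roots_multiset_prod_X_sub_C] at this
  rw [Finset.sum_eq_multiset_sum]
  have : Finset.univ.val.map (fun i => |hA.eigenvalues i - c|)
      = (Finset.univ.val.map hA.eigenvalues).map (fun x => |x - c|) := by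
    rw [Multiset.map_map]; rfl
  rw [this, hμ]



/-- **Signless Laplacian spectrum and energy of the non-commuting graph of `D_{2m}`, `m` odd.**
If `m ≥ 3` is odd, the non-commuting graph `Γ` of the dihedral group `D_{2m}` has `2m - 1`
vertices and `3m(m-1)/2` edges, the characteristic polynomial of its signless Laplacian is
`(x - m)^(m-2) (x - (2m-3))^(m-1) (x² - (4m-3)x + (2m² - 2m))`, and
`LE⁺(Γ) = 9/5 + √33` if `m = 3` and
`LE⁺(Γ) = (2m³ - 10m² + 12m - 3)/(2m - 1) + √(8m² - 16m + 9)` if `m ≥ 5`. -/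
theorem stmt_0 (m : ℕ) (hm : 3 ≤ m) (hodd : Odd m) :
    haveI : NeZero m := ⟨by omega⟩
    Fintype.card {g : DihedralGroup m // g ∉ Subgroup.center (DihedralGroup m)} = 2 * m - 1 ∧
    2 * (ncGraph (DihedralGroup m)).edgeFinset.card = 3 * m * (m - 1) ∧
    (signlessLap (ncGraph (DihedralGroup m))).charpoly =
      (X - C (m : ℝ)) ^ (m - 2) * (X - C (2 * (m : ℝ) - 3)) ^ (m - 1) *
        (X ^ 2 - C (4 * (m : ℝ) - 3) * X + C (2 * (m : ℝ) ^ 2 - 2 * (m : ℝ))) ∧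
    (m = 3 → slapEnergy (ncGraph (DihedralGroup m)) = 9 / 5 + Real.sqrt 33) ∧
    (5 ≤ m → slapEnergy (ncGraph (DihedralGroup m)) =
      (2 * (m : ℝ) ^ 3 - 10 * (m : ℝ) ^ 2 + 12 * (m : ℝ) - 3) / (2 * (m : ℝ) - 1) +
        Real.sqrt (8 * (m : ℝ) ^ 2 - 16 * (m : ℝ) + 9)) := by
  haveI : NeZero m := ⟨by omega⟩
  have hM3 : (3:ℝ) ≤ (m:ℝ) := by exact_mod_cast hm
  have hden : (0:ℝ) < 2*(m:ℝ) - 1 := by nlinarith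
  have hcard := card_VT hm hodd
  have hedge := edge_count hm hodd
  have hcp : (signlessLap (ncGraph (DihedralGroup m))).charpoly
      = (X - C (m : ℝ)) ^ (m - 2) * (X - C (2 * (m : ℝ) - 3)) ^ (m - 1) *
        (X ^ 2 - C (4 * (m : ℝ) - 3) * X + C (2 * (m : ℝ) ^ 2 - 2 * (m : ℝ))) := by
    have h1 : signlessLap (ncGraph (DihedralGroup m))
        = (Matrix.reindex (vEquiv hm hodd) (vEquiv hm hodd)) (Qc m) := by
      rw [slap_eq hm hodd, Matrix.reindex_apply]
    rw [h1, Matrix.charpoly_reindex, charpoly_Qc_eq_TM hm, charpoly_TM hm]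
  have hHerm : (signlessLap (ncGraph (DihedralGroup m))).IsHermitian := by
    unfold signlessLap
    apply Matrix.IsHermitian.add
    · exact Matrix.isHermitian_diagonal _
    · rw [Matrix.IsHermitian, Matrix.conjTranspose_eq_transpose_of_trivial]
      exact SimpleGraph.transpose_adjMatrix _
  have hD0 : (0:ℝ) ≤ 8*(m:ℝ)^2 - 16*(m:ℝ) + 9 := by nlinarith
  set s : ℝ := Real.sqrt (8*(m:ℝ)^2 - 16*(m:ℝ) + 9) with hsdef
  have hs0 : 0 ≤ s := Real.sqrt_nonneg _
  have hs2 : s^2 = 8*(m:ℝ)^2 - 16*(m:ℝ) + 9 := Real.sq_sqrt hD0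
  have hs23 : 2*(m:ℝ) - 3 ≤ s := by
    rw [hsdef]
    exact Real.le_sqrt_of_sq_le (by nlinarith)
  set r1 : ℝ := ((4*(m:ℝ)-3) + s)/2 with hr1
  set r2 : ℝ := ((4*(m:ℝ)-3) - s)/2 with hr2
  have hq : (X - C r1) * (X - C r2)
      = X^2 - C (4*(m:ℝ)-3) * X + C (2*(m:ℝ)^2-2*(m:ℝ)) := by
    have h1 : r1 + r2 = 4*(m:ℝ)-3 := by rw [hr1, hr2]; ring
    have h2 : r1 * r2 = 2*(m:ℝ)^2 - 2*(m:ℝ) := by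
      rw [hr1, hr2]; linear_combination (-(1:ℝ)/4) * hs2
    calc (X - C r1) * (X - C r2) = X^2 - C (r1 + r2) * X + C (r1 * r2) := by
          rw [map_add, _root_.map_mul]; ring
      _ = _ := by rw [h1, h2]
  set ν : Multiset ℝ := Multiset.replicate (m-2) ((m:ℝ))
      + Multiset.replicate (m-1) (2*(m:ℝ)-3) + {r1, r2} with hν
  have hνprod : (signlessLap (ncGraph (DihedralGroup m))).charpoly
      = (ν.map (fun a => X - C a)).prod := by
    rw [hcp, hν]
    rw [Multiset.map_add, Multiset.map_add, Multiset.prod_add, Multiset.prod_add,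
      Multiset.map_replicate, Multiset.map_replicate, Multiset.prod_replicate,
      Multiset.prod_replicate]
    simp only [Multiset.insert_eq_cons, Multiset.map_cons, Multiset.prod_cons,
      Multiset.map_singleton, Multiset.prod_singleton]
    rw [hq]
  have hsum := eigsum_of_charpoly hHerm (herm_charpoly hHerm) ν hνprod
    (avgDeg (ncGraph (DihedralGroup m)))
  set c : ℝ := avgDeg (ncGraph (DihedralGroup m)) with hcdef
  have hcavg : c = 3*(m:ℝ)*((m:ℝ)-1)/(2*(m:ℝ)-1) := by
    rw [hcdef, avgDeg, hcard]
    have h2E : 2 * ((ncGraph (DihedralGroup m)).edgeFinset.card : ℝ) = 3*(m:ℝ)*((m:ℝ)-1) := by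
      have h' : ((2 * (ncGraph (DihedralGroup m)).edgeFinset.card : ℕ) : ℝ)
          = ((3*m*(m-1) : ℕ) : ℝ) := by rw [hedge]
      rw [Nat.cast_mul, Nat.cast_mul, Nat.cast_mul, Nat.cast_sub (by omega : 1 ≤ m)] at h'
      push_cast at h' ⊢
      linarith
    have hcast : ((2*m-1 : ℕ) : ℝ) = 2*(m:ℝ)-1 := by
      rw [Nat.cast_sub (by omega : 1 ≤ 2*m)]
      push_cast; ring
    rw [hcast, h2E]
  have hsum2 : (ν.map (fun x => |x - c|)).sum
      = ↑(m-2) * |(m:ℝ) - c| + ↑(m-1) * |2*(m:ℝ)-3 - c| + (|r1 - c| + |r2 - c|) := by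
    rw [hν]
    simp only [Multiset.map_add, Multiset.sum_add, Multiset.map_replicate,
      Multiset.sum_replicate, nsmul_eq_mul, Multiset.insert_eq_cons, Multiset.map_cons,
      Multiset.sum_cons, Multiset.map_singleton, Multiset.sum_singleton]
  have hEnergy : slapEnergy (ncGraph (DihedralGroup m))
      = ↑(m-2) * |(m:ℝ) - c| + ↑(m-1) * |2*(m:ℝ)-3 - c| + (|r1 - c| + |r2 - c|) := by
    unfold slapEnergy eigAbsSum
    rw [dif_pos hHerm, ← hcdef, hsum, hsum2]
  -- general sign facts
  have e1 : |(m:ℝ) - c| = c - (m:ℝ) := by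
    have : (m:ℝ) - c ≤ 0 := by
      have : (m:ℝ) - c = ((m:ℝ)*(2*(m:ℝ)-1) - 3*(m:ℝ)*((m:ℝ)-1))/(2*(m:ℝ)-1) := by
        rw [hcavg, eq_div_iff hden.ne', sub_mul, div_mul_cancel₀ _ hden.ne']
      rw [this]
      apply div_nonpos_of_nonpos_of_nonneg
      · nlinarith
      · linarith
    rw [abs_of_nonpos this]; ring
  have e3 : |r1 - c| = r1 - c := by
    apply abs_of_nonneg
    have : r1 - c = ((4*(m:ℝ)-3+s)*(2*(m:ℝ)-1) - 6*(m:ℝ)*((m:ℝ)-1))/(2*(2*(m:ℝ)-1)) := by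
      rw [hr1, hcavg, div_sub_div _ _ two_ne_zero hden.ne']; ring
    rw [this]
    apply div_nonneg
    · nlinarith [mul_nonneg hs0 (le_of_lt hden)]
    · linarith
  have e4 : |r2 - c| = c - r2 := by
    have hr2M : r2 ≤ (m:ℝ) := by rw [hr2]; linarith [hs23]
    have hMc : (m:ℝ) ≤ c := by
      have := e1
      rcases abs_cases ((m:ℝ) - c) with ⟨h1, h2⟩ | ⟨h1, h2⟩ <;> linarith
    rw [abs_of_nonpos (by linarith)]; ring
  have hcast2 : ((m-2 : ℕ) : ℝ) = (m:ℝ) - 2 := by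
    rw [Nat.cast_sub (by omega : 2 ≤ m)]; push_cast; ring
  have hcast1 : ((m-1 : ℕ) : ℝ) = (m:ℝ) - 1 := by
    rw [Nat.cast_sub (by omega : 1 ≤ m)]; push_cast; ring
  refine ⟨hcard, hedge, hcp, ?_, ?_⟩
  · intro h3
    subst h3
    have hc3 : c = 18/5 := by rw [hcavg]; norm_num
    have e2 : |2*((3:ℕ):ℝ)-3 - c| = c - (2*((3:ℕ):ℝ)-3) := by
      rw [abs_of_nonpos (by rw [hc3]; norm_num)]; ring
    rw [hEnergy, e1, e2, e3, e4, hcast1, hcast2, hc3]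
    rw [show (33:ℝ) = 8*((3:ℕ):ℝ)^2 - 16*((3:ℕ):ℝ) + 9 by norm_num, ← hsdef]
    rw [hr1, hr2]
    norm_num
    ring
  · intro h5
    have hM5 : (5:ℝ) ≤ (m:ℝ) := by exact_mod_cast h5
    have e2 : |2*(m:ℝ)-3 - c| = 2*(m:ℝ)-3 - c := by
      apply abs_of_nonneg
      have : 2*(m:ℝ)-3 - c = ((2*(m:ℝ)-3)*(2*(m:ℝ)-1) - 3*(m:ℝ)*((m:ℝ)-1))/(2*(m:ℝ)-1) := by
        rw [hcavg, eq_div_iff hden.ne', sub_mul, div_mul_cancel₀ _ hden.ne']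
      rw [this]
      apply div_nonneg
      · nlinarith
      · linarith
    rw [hEnergy, e1, e2, e3, e4, hcast1, hcast2, hcavg, hr1, hr2]
    have hne : (2*(m:ℝ)-1) ≠ 0 := hden.ne'
    have hc : (3*(m:ℝ)*((m:ℝ)-1)/(2*(m:ℝ)-1))*(2*(m:ℝ)-1) = 3*(m:ℝ)*((m:ℝ)-1) :=
      div_mul_cancel₀ _ hne
    rw [div_add' _ _ _ hne, eq_div_iff hne]
    linear_combination (-1:ℝ) * hc
end
end

section
/- Let p be a prime and let G be a finite non-abelian group whose central quotient G/Z(G) is isomorphic to ℤ_p × ℤ_p, and set n = |Z(G)|. Let Γ be the non-commuting graph of G, which has v = (p² − 1)n vertices. Then the characteristic polynomial of the signless Laplacian matrix of Γ equals (x − pn(p−1))^{(p²−1)n − (p+1)} · (x − n(p−1)²)^p · (x − 2pn(p−1)), and E(Γ) = LE(Γ) = LE⁺(Γ) = 2p(p−1)n; moreover v < E(Γ) < 2v − 2, so Γ is neither hypoenergetic, hyperenergetic, L-hyperenergetic, nor Q-hyperenergetic. -/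
open Matrix Polynomial

noncomputable section

section Herm
variable {V : Type*} [Fintype V] [DecidableEq V]

lemma charpoly_diag {V : Type*} [Fintype V] [DecidableEq V] (d : V → ℝ) :
    (Matrix.diagonal d).charpoly = ∏ i, (X - C (d i)) := by
  rw [Matrix.charpoly, charmatrix]
  have : (scalar V) (X : ℝ[X]) - (RingHom.mapMatrix C) (diagonal d)
      = diagonal (fun i => X - C (d i)) := by
    ext i j
    by_cases h : i = j <;> simp [h, scalar_apply, diagonal]
  rw [this, det_diagonal]

lemma charpoly_conj {V : Type*} [Fintype V] [DecidableEq V] (U : Matrix.unitaryGroup V ℝ)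
    (D : Matrix V V ℝ) :
    ((U : Matrix V V ℝ) * D * star (U : Matrix V V ℝ)).charpoly = D.charpoly := by
  have hU : (U : Matrix V V ℝ) * star (U : Matrix V V ℝ) = 1 :=
    Matrix.mem_unitaryGroup_iff.mp U.2
  unfold Matrix.charpoly
  have key : charmatrix ((U : Matrix V V ℝ) * D * star (U : Matrix V V ℝ))
      = (U : Matrix V V ℝ).map C * charmatrix D * (star (U : Matrix V V ℝ)).map C := by
    rw [charmatrix, charmatrix, mul_sub, sub_mul]
    congr 1
    · have hcomm : (U : Matrix V V ℝ).map C * (scalar V) (X : ℝ[X])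
          = (scalar V) (X : ℝ[X]) * (U : Matrix V V ℝ).map C :=
        (Matrix.scalar_commute (X : ℝ[X]) (fun r => Commute.all _ r) _).symm
      rw [hcomm, mul_assoc, ← Matrix.map_mul, hU,
        Matrix.map_one C (map_zero C) (map_one C), mul_one]
    · simp [RingHom.mapMatrix_apply, Matrix.map_mul]
  rw [key, det_mul, det_mul, mul_comm ((U : Matrix V V ℝ).map C).det, mul_assoc,
    ← det_mul, ← Matrix.map_mul, hU, Matrix.map_one C (map_zero C) (map_one C), det_one, mul_one]


lemma unitary_conj_mul (U : Matrix.unitaryGroup V ℝ) (A B : Matrix V V ℝ) :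
    ((U : Matrix V V ℝ) * A * star (U : Matrix V V ℝ)) *
      ((U : Matrix V V ℝ) * B * star (U : Matrix V V ℝ)) =
    (U : Matrix V V ℝ) * (A * B) * star (U : Matrix V V ℝ) := by
  have hU' : star (U : Matrix V V ℝ) * (U : Matrix V V ℝ) = 1 :=
    Matrix.mem_unitaryGroup_iff'.mp U.2
  have hcancel : ∀ Z : Matrix V V ℝ, star (U : Matrix V V ℝ) * ((U : Matrix V V ℝ) * Z) = Z := by
    intro Z; rw [← Matrix.mul_assoc, hU', Matrix.one_mul]
  simp only [Matrix.mul_assoc, hcancel]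

lemma unitary_conj_zero (U : Matrix.unitaryGroup V ℝ) (D : Matrix V V ℝ)
    (h : (U : Matrix V V ℝ) * D * star (U : Matrix V V ℝ) = 0) : D = 0 := by
  have hU' : star (U : Matrix V V ℝ) * (U : Matrix V V ℝ) = 1 :=
    Matrix.mem_unitaryGroup_iff'.mp U.2
  have h2 := congrArg (fun X => star (U : Matrix V V ℝ) * X * (U : Matrix V V ℝ)) h
  simp only [Matrix.mul_zero, Matrix.zero_mul, ← Matrix.mul_assoc] at h2
  rw [hU', Matrix.one_mul, Matrix.mul_assoc, hU', Matrix.mul_one] at h2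
  exact h2

variable (M : Matrix V V ℝ) (hM : M.IsHermitian)

lemma spec_real : M = (hM.eigenvectorUnitary : Matrix V V ℝ) *
    diagonal hM.eigenvalues * star (hM.eigenvectorUnitary : Matrix V V ℝ) := by
  have := hM.spectral_theorem
  simpa [RCLike.ofReal_real_eq_id] using this

lemma herm_trace : M.trace = ∑ i, hM.eigenvalues i := by
  conv_lhs => rw [spec_real M hM]
  rw [Matrix.trace_mul_cycle, Matrix.mem_unitaryGroup_iff'.mp
    hM.eigenvectorUnitary.2, Matrix.one_mul, Matrix.trace_diagonal]

lemma herm_trace_sq : (M * M).trace = ∑ i, (hM.eigenvalues i)^2 := by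
  conv_lhs => rw [spec_real M hM]
  rw [unitary_conj_mul, Matrix.trace_mul_cycle, Matrix.mem_unitaryGroup_iff'.mp
    hM.eigenvectorUnitary.2, Matrix.one_mul, Matrix.diagonal_mul_diagonal,
    Matrix.trace_diagonal]
  simp [pow_two]

lemma herm_charpoly_s17 : M.charpoly = ∏ i, (X - C (hM.eigenvalues i)) := by
  conv_lhs => rw [spec_real M hM]
  rw [charpoly_conj, charpoly_diag]

lemma herm_ann (r1 r2 r3 : ℝ)
    (hann : (M - r1 • 1) * ((M - r2 • 1) * (M - r3 • 1)) = 0) (i : V) :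
    hM.eigenvalues i = r1 ∨ hM.eigenvalues i = r2 ∨ hM.eigenvalues i = r3 := by
  set U := hM.eigenvectorUnitary with hUdef
  have hshift : ∀ r : ℝ, M - r • 1 = (U : Matrix V V ℝ) *
      diagonal (fun j => hM.eigenvalues j - r) * star (U : Matrix V V ℝ) := by
    intro r
    have h1 : (r • (1 : Matrix V V ℝ)) = (U : Matrix V V ℝ) * (r • 1) *
        star (U : Matrix V V ℝ) := by
      rw [Matrix.mul_smul, Matrix.mul_one, Matrix.smul_mul,
        Matrix.mem_unitaryGroup_iff.mp U.2]
    conv_lhs => rw [spec_real M hM, h1]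
    rw [← Matrix.sub_mul, ← Matrix.mul_sub]
    congr 2
    rw [Matrix.smul_one_eq_diagonal, Matrix.diagonal_sub]
  rw [hshift r1, hshift r2, hshift r3, unitary_conj_mul, unitary_conj_mul,
    Matrix.diagonal_mul_diagonal, Matrix.diagonal_mul_diagonal] at hann
  have hz := unitary_conj_zero U _ hann
  have h0 : (hM.eigenvalues i - r1) * ((hM.eigenvalues i - r2) * (hM.eigenvalues i - r3)) = 0 := by
    have := congrFun (congrFun hz i) i
    simpa [Matrix.diagonal] using this
  rcases mul_eq_zero.mp h0 with h | h
  · left; linarith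
  rcases mul_eq_zero.mp h with h | h
  · right; left; linarith
  · right; right; linarith

end Herm

section Count
variable {V : Type*} [Fintype V] [DecidableEq V] (M : Matrix V V ℝ) (hM : M.IsHermitian)

lemma herm_main (r1 r2 r3 : ℝ) (h12 : r1 ≠ r2) (h13 : r1 ≠ r3) (h23 : r2 ≠ r3)
    (hann : (M - r1 • 1) * ((M - r2 • 1) * (M - r3 • 1)) = 0)
    (m1 m2 m3 : ℕ) (hsum : m1 + m2 + m3 = Fintype.card V)
    (ht1 : M.trace = m1 * r1 + m2 * r2 + m3 * r3)
    (ht2 : (M * M).trace = m1 * r1^2 + m2 * r2^2 + m3 * r3^2) :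
    M.charpoly = (X - C r1)^m1 * (X - C r2)^m2 * (X - C r3)^m3 ∧
    ∀ c : ℝ, ∑ i, |hM.eigenvalues i - c| =
      m1 * |r1 - c| + m2 * |r2 - c| + m3 * |r3 - c| := by
  classical
  set lam := hM.eigenvalues with hlam
  have htri : ∀ i, lam i = r1 ∨ lam i = r2 ∨ lam i = r3 := herm_ann M hM r1 r2 r3 hann
  set s1 : Finset V := Finset.univ.filter (fun i => lam i = r1) with hs1
  set s2 : Finset V := Finset.univ.filter (fun i => lam i = r2) with hs2
  set s3 : Finset V := Finset.univ.filter (fun i => lam i = r3) with hs3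
  have hA : (Finset.univ.filter (fun i => ¬ lam i = r1)).filter (fun i => lam i = r2) = s2 := by
    ext i
    simp only [Finset.mem_filter, Finset.mem_univ, true_and, hs2]
    constructor
    · rintro ⟨_, h⟩; exact h
    · intro h; exact ⟨fun h' => h12 (h'.symm.trans h), h⟩
  have hB : (Finset.univ.filter (fun i => ¬ lam i = r1)).filter (fun i => ¬ lam i = r2) = s3 := by
    ext i
    simp only [Finset.mem_filter, Finset.mem_univ, true_and, hs3]
    constructor
    · rintro ⟨h1, h2⟩; rcases htri i with h | h | h
      · exact absurd h h1
      · exact absurd h h2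
      · exact h
    · intro h
      constructor
      · intro h'; exact h13 (h' ▸ h)
      · intro h'; exact h23 (h' ▸ h)
  have hsumsplit : ∀ f : V → ℝ, ∑ i, f i = (∑ i ∈ s1, f i) + ((∑ i ∈ s2, f i) + ∑ i ∈ s3, f i) := by
    intro f
    rw [← Finset.sum_filter_add_sum_filter_not Finset.univ (fun i => lam i = r1) f,
      ← Finset.sum_filter_add_sum_filter_not
        (Finset.univ.filter (fun i => ¬ lam i = r1)) (fun i => lam i = r2) f, hA, hB]
  have hgsum : ∀ g : ℝ → ℝ, ∑ i, g (lam i) =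
      s1.card * g r1 + (s2.card * g r2 + s3.card * g r3) := by
    intro g
    rw [hsumsplit (fun i => g (lam i))]
    congr 1
    · rw [Finset.sum_congr rfl (fun i hi => by
        rw [(Finset.mem_filter.mp hi).2]), Finset.sum_const, nsmul_eq_mul]
    congr 1
    · rw [Finset.sum_congr rfl (fun i hi => by
        rw [(Finset.mem_filter.mp hi).2]), Finset.sum_const, nsmul_eq_mul]
    · rw [Finset.sum_congr rfl (fun i hi => by
        rw [(Finset.mem_filter.mp hi).2]), Finset.sum_const, nsmul_eq_mul]
  have E0 : (s1.card : ℝ) + s2.card + s3.card = (m1 : ℝ) + m2 + m3 := by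
    have h1 := hgsum (fun _ => 1)
    simp only [mul_one] at h1
    have h2 : ∑ _i : V, (1:ℝ) = (Fintype.card V : ℝ) := by simp
    rw [h2] at h1
    have h3 : ((m1 + m2 + m3 : ℕ) : ℝ) = (Fintype.card V : ℝ) := by rw [hsum]
    push_cast at h3 ⊢
    linarith
  have E1 : (s1.card : ℝ) * r1 + s2.card * r2 + s3.card * r3
      = (m1 : ℝ) * r1 + m2 * r2 + m3 * r3 := by
    have h1 := hgsum id
    simp only [id] at h1
    rw [← herm_trace M hM, ht1] at h1
    linarith
  have E2 : (s1.card : ℝ) * r1^2 + s2.card * r2^2 + s3.card * r3^2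
      = (m1 : ℝ) * r1^2 + m2 * r2^2 + m3 * r3^2 := by
    have h1 := hgsum (fun t => t^2)
    rw [← herm_trace_sq M hM, ht2] at h1
    linarith
  have hk2 : (s2.card : ℝ) = m2 := by
    have h : ((s2.card : ℝ) - m2) * ((r2 - r1) * (r2 - r3)) = 0 := by
      linear_combination E2 - (r1 + r3) * E1 + r1 * r3 * E0
    rcases mul_eq_zero.mp h with h | h
    · linarith
    · rcases mul_eq_zero.mp h with h | h
      · exact absurd (by linarith : r1 = r2) h12
      · exact absurd (by linarith : r2 = r3) h23
  have hk3 : (s3.card : ℝ) = m3 := by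
    have h : ((s3.card : ℝ) - m3) * ((r3 - r1) * (r3 - r2)) = 0 := by
      linear_combination E2 - (r1 + r2) * E1 + r1 * r2 * E0
    rcases mul_eq_zero.mp h with h | h
    · linarith
    · rcases mul_eq_zero.mp h with h | h
      · exact absurd (by linarith : r1 = r3) h13
      · exact absurd (by linarith : r2 = r3) h23
  have hk1 : (s1.card : ℝ) = m1 := by linarith
  have hc1 : s1.card = m1 := Nat.cast_injective hk1
  have hc2 : s2.card = m2 := Nat.cast_injective hk2
  have hc3 : s3.card = m3 := Nat.cast_injective hk3
  constructor
  · rw [herm_charpoly_s17 M hM]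
    rw [← Finset.prod_filter_mul_prod_filter_not Finset.univ (fun i => lam i = r1)
        (fun i => X - C (lam i)),
      ← Finset.prod_filter_mul_prod_filter_not
        (Finset.univ.filter (fun i => ¬ lam i = r1)) (fun i => lam i = r2)
        (fun i => X - C (lam i)), hA, hB]
    rw [Finset.prod_congr rfl (fun i hi => by rw [(Finset.mem_filter.mp hi).2] :
        ∀ i ∈ s1, X - C (lam i) = X - C r1), Finset.prod_const, hc1]
    rw [Finset.prod_congr rfl (fun i hi => by rw [(Finset.mem_filter.mp hi).2] :
        ∀ i ∈ s2, X - C (lam i) = X - C r2), Finset.prod_const, hc2]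
    rw [Finset.prod_congr rfl (fun i hi => by rw [(Finset.mem_filter.mp hi).2] :
        ∀ i ∈ s3, X - C (lam i) = X - C r3), Finset.prod_const, hc3]
    rw [mul_assoc]
  · intro c
    have := hgsum (fun t => |t - c|)
    rw [this, hc1, hc2, hc3]
    ring

end Count


section GroupPart
variable {G : Type*} [Group G] {p n : ℕ}

namespace NCaux

variable (e : (G ⧸ Subgroup.center G) ≃* Multiplicative (ZMod p × ZMod p))

def av (q : G ⧸ Subgroup.center G) : ZMod p × ZMod p := Multiplicative.toAdd (e q)

lemma av_injective : Function.Injective (av e) :=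
  fun _ _ h => e.injective (Multiplicative.toAdd.injective h)

lemma av_mul (q r : G ⧸ Subgroup.center G) : av e (q * r) = av e q + av e r := by
  simp [av]

lemma av_one : av e 1 = 0 := by simp [av]

lemma av_pow (q : G ⧸ Subgroup.center G) (k : ℕ) : av e (q ^ k) = k • av e q := by
  simp [av]

lemma av_zpow (q : G ⧸ Subgroup.center G) (k : ℤ) : av e (q ^ k) = k • av e q := by
  simp [av]

lemma av_eq_zero_iff (q : G ⧸ Subgroup.center G) : av e q = 0 ↔ q = 1 := by
  constructor
  · intro h
    have : e q = 1 := Multiplicative.toAdd.injective (by simpa [av] using h)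
    exact e.injective (by simpa using this)
  · intro h; simp [h, av_one]

lemma smul_eq_zero_iff (hp : p.Prime) (c : ZMod p) (a : ZMod p × ZMod p) (ha : a ≠ 0) :
    c • a = 0 ↔ c = 0 := by
  haveI : Fact p.Prime := ⟨hp⟩
  constructor
  · intro h
    by_contra hc
    apply ha
    have h1 : c • a.1 = 0 := congrArg Prod.fst h
    have h2 : c • a.2 = 0 := congrArg Prod.snd h
    rw [smul_eq_mul] at h1 h2
    have e1 : a.1 = 0 := by rcases mul_eq_zero.mp h1 with h | h; exact absurd h hc; exact h
    have e2 : a.2 = 0 := by rcases mul_eq_zero.mp h2 with h | h; exact absurd h hc; exact h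
    exact Prod.ext e1 e2
  · intro h; simp [h]

lemma pi_eq_one_iff (g : G) : (g : G ⧸ Subgroup.center G) = 1 ↔ g ∈ Subgroup.center G :=
  QuotientGroup.eq_one_iff g

/-- The key structural lemma: two noncentral elements commute iff one's image in the
central quotient is a power of the other's. -/
lemma comm_iff (hp : p.Prime) (e : (G ⧸ Subgroup.center G) ≃* Multiplicative (ZMod p × ZMod p))
    (hna : ∃ a b : G, a * b ≠ b * a)
    (x y : G) (hx : x ∉ Subgroup.center G) (hy : y ∉ Subgroup.center G) :
    x * y = y * x ↔ ∃ k : ℤ, (y : G ⧸ Subgroup.center G) = (x : G ⧸ Subgroup.center G) ^ k := by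
  haveI : Fact p.Prime := ⟨hp⟩
  constructor
  · intro hcom
    by_contra hno
    push_neg at hno
    have haxne : av e (x : G ⧸ Subgroup.center G) ≠ 0 := fun h =>
      hx ((pi_eq_one_iff x).mp ((av_eq_zero_iff e _).mp h))
    have hayne : av e (y : G ⧸ Subgroup.center G) ≠ 0 := fun h =>
      hy ((pi_eq_one_iff y).mp ((av_eq_zero_iff e _).mp h))
    have hnomul : ∀ c : ZMod p,
        av e (y : G ⧸ Subgroup.center G) ≠ c • av e (x : G ⧸ Subgroup.center G) := by
      intro c hc
      apply hno (c.val : ℤ)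
      apply av_injective e
      rw [av_zpow]
      have hval : ((c.val : ℤ) : ZMod p) = c := by
        push_cast
        simp [ZMod.natCast_val, ZMod.cast_id]
      rw [← Int.cast_smul_eq_zsmul (ZMod p), hval, hc]
    have hinj : Function.Injective
        (fun cd : ZMod p × ZMod p =>
          cd.1 • av e (x : G ⧸ Subgroup.center G) + cd.2 • av e (y : G ⧸ Subgroup.center G)) := by
      rintro ⟨c, d⟩ ⟨c', d'⟩ hcd
      simp only at hcd
      have hdd : d = d' := by
        by_contra hne
        have h1 : (d - d') • av e (y : G ⧸ Subgroup.center G)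
            = (c' - c) • av e (x : G ⧸ Subgroup.center G) := by
          rw [sub_smul, sub_smul]
          linear_combination (norm := module) hcd
        have : av e (y : G ⧸ Subgroup.center G)
            = ((d - d')⁻¹ * (c' - c)) • av e (x : G ⧸ Subgroup.center G) := by
          rw [mul_smul, ← h1, smul_smul, inv_mul_cancel₀ (sub_ne_zero.mpr hne), one_smul]
        exact hnomul _ this
      subst hdd
      have hz : (c - c') • av e (x : G ⧸ Subgroup.center G) = 0 := by
        rw [sub_smul]
        linear_combination (norm := module) hcd
      have hcc : c - c' = 0 := (smul_eq_zero_iff hp _ _ haxne).mp hz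
      have : c = c' := by linear_combination (norm := ring) hcc
      exact Prod.ext this rfl
    have hsurj := (Finite.injective_iff_surjective).mp hinj
    have hgen : ∀ g : G, ∃ i j : ℕ, ∃ z ∈ Subgroup.center G, g = x ^ i * y ^ j * z := by
      intro g
      obtain ⟨⟨c, d⟩, hcd⟩ := hsurj (av e (g : G ⧸ Subgroup.center G))
      refine ⟨c.val, d.val, ?_⟩
      have hq : ((x ^ c.val * y ^ d.val : G) : G ⧸ Subgroup.center G)
          = (g : G ⧸ Subgroup.center G) := by
        apply av_injective e
        rw [show ((x ^ c.val * y ^ d.val : G) : G ⧸ Subgroup.center G)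
            = ((x : G ⧸ Subgroup.center G)) ^ c.val * ((y : G ⧸ Subgroup.center G)) ^ d.val by
          rfl]
        rw [av_mul, av_pow, av_pow, ← hcd]
        simp only
        rw [← Nat.cast_smul_eq_nsmul (ZMod p) c.val, ← Nat.cast_smul_eq_nsmul (ZMod p) d.val]
        simp [ZMod.natCast_val, ZMod.cast_id]
      have hzc : (x ^ c.val * y ^ d.val)⁻¹ * g ∈ Subgroup.center G := by
        rw [← pi_eq_one_iff]
        rw [show (((x ^ c.val * y ^ d.val)⁻¹ * g : G) : G ⧸ Subgroup.center G)
            = ((x ^ c.val * y ^ d.val : G) : G ⧸ Subgroup.center G)⁻¹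
              * (g : G ⧸ Subgroup.center G) by rfl]
        rw [hq]
        simp
      exact ⟨(x ^ c.val * y ^ d.val)⁻¹ * g, hzc, by group⟩
    obtain ⟨a, b, hab⟩ := hna
    apply hab
    obtain ⟨i, j, z, hz, rfl⟩ := hgen a
    obtain ⟨i', j', w, hw, rfl⟩ := hgen b
    have Hxy : Commute x y := hcom
    have cz : ∀ g : G, Commute g z := fun g => Subgroup.mem_center_iff.mp hz g
    have cw : ∀ g : G, Commute g w := fun g => Subgroup.mem_center_iff.mp hw g
    have h1 : Commute (x ^ i * y ^ j * z) (x ^ i') :=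
      (((Commute.refl x).pow_pow i i').mul_left ((Hxy.symm).pow_pow j i')).mul_left
        (cz (x ^ i')).symm
    have h2 : Commute (x ^ i * y ^ j * z) (y ^ j') :=
      ((Hxy.pow_pow i j').mul_left ((Commute.refl y).pow_pow j j')).mul_left
        (cz (y ^ j')).symm
    have h3 : Commute (x ^ i * y ^ j * z) w := cw _
    exact ((h1.mul_right h2).mul_right h3).eq
  · rintro ⟨k, hk⟩
    set zc := (x ^ k)⁻¹ * y with hzc
    have hzmem : zc ∈ Subgroup.center G := by
      rw [← pi_eq_one_iff]
      rw [show ((zc : G) : G ⧸ Subgroup.center G)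
          = ((x : G ⧸ Subgroup.center G) ^ k)⁻¹ * (y : G ⧸ Subgroup.center G) by rfl]
      rw [hk]
      simp
    have hc : Commute x zc := Subgroup.mem_center_iff.mp hzmem x
    have hxk : Commute x (x ^ k) := (Commute.refl x).zpow_right k
    have hy' : y = x ^ k * zc := by rw [hzc]; group
    have : Commute x y := by rw [hy']; exact hxk.mul_right hc
    exact this.eq


lemma zpow_eq_one_iff (hp : p.Prime)
    (e : (G ⧸ Subgroup.center G) ≃* Multiplicative (ZMod p × ZMod p))
    (q : G ⧸ Subgroup.center G) (hq : q ≠ 1) (k : ℤ) :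
    q ^ k = 1 ↔ (k : ZMod p) = 0 := by
  haveI : Fact p.Prime := ⟨hp⟩
  have hqa : av e q ≠ 0 := fun h => hq ((av_eq_zero_iff e q).mp h)
  rw [← av_eq_zero_iff e, av_zpow, ← Int.cast_smul_eq_zsmul (ZMod p),
    smul_eq_zero_iff hp _ _ hqa]

lemma two_le_n [Finite G] (e : (G ⧸ Subgroup.center G) ≃* Multiplicative (ZMod p × ZMod p))
    (hna : ∃ a b : G, a * b ≠ b * a) (hn : Nat.card (Subgroup.center G) = n) : 2 ≤ n := by
  rcases Nat.lt_or_ge n 2 with h | h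
  · exfalso
    interval_cases n
    · have := Nat.card_pos (α := Subgroup.center G)
      omega
    · have hbot : Subgroup.center G = ⊥ := Subgroup.eq_bot_of_card_eq _ hn
      obtain ⟨a, b, hab⟩ := hna
      apply hab
      have e' : (G ⧸ (⊥ : Subgroup G)) ≃* Multiplicative (ZMod p × ZMod p) :=
        (QuotientGroup.quotientMulEquivOfEq hbot.symm).trans e
      have f : G ≃* Multiplicative (ZMod p × ZMod p) :=
        QuotientGroup.quotientBot.symm.trans e'
      apply f.injective
      rw [_root_.map_mul, _root_.map_mul, mul_comm]
  · exact h

lemma comm_trans (hp : p.Prime)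
    (e : (G ⧸ Subgroup.center G) ≃* Multiplicative (ZMod p × ZMod p))
    (hna : ∃ a b : G, a * b ≠ b * a) (x y z : G)
    (hx : x ∉ Subgroup.center G) (hy : y ∉ Subgroup.center G) (hz : z ∉ Subgroup.center G)
    (h1 : z * x = x * z) (h2 : z * y = y * z) : x * y = y * x := by
  haveI : Fact p.Prime := ⟨hp⟩
  obtain ⟨k, hk⟩ := (comm_iff hp e hna z x hz hx).mp h1
  obtain ⟨l, hl⟩ := (comm_iff hp e hna z y hz hy).mp h2
  have hzq : (z : G ⧸ Subgroup.center G) ≠ 1 := fun h => hz ((pi_eq_one_iff z).mp h)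
  have hk0 : ((k : ZMod p)) ≠ 0 := by
    intro h0
    apply hx
    apply (pi_eq_one_iff x).mp
    rw [hk, zpow_eq_one_iff hp e _ hzq, h0]
  set m : ℕ := (((k : ZMod p))⁻¹ * (l : ZMod p)).val with hm
  have hone : (z : G ⧸ Subgroup.center G) ^ (k * (m : ℤ) - l) = 1 := by
    rw [zpow_eq_one_iff hp e _ hzq]
    rw [hm]
    push_cast
    rw [ZMod.natCast_val, ZMod.cast_id, ← mul_assoc, mul_inv_cancel₀ hk0, one_mul, sub_self]
  refine (comm_iff hp e hna x y hx hy).mpr ⟨(m : ℤ), ?_⟩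
  rw [hk, ← _root_.zpow_mul, hl, show k * (m : ℤ) = l + (k * (m : ℤ) - l) by ring,
    _root_.zpow_add, hone, mul_one]

section Counting
variable [Fintype G] [DecidableEq G]

lemma card_commuting (hp : p.Prime)
    (e : (G ⧸ Subgroup.center G) ≃* Multiplicative (ZMod p × ZMod p))
    (hna : ∃ a b : G, a * b ≠ b * a) (hn : Nat.card (Subgroup.center G) = n)
    (x : G) (hx : x ∉ Subgroup.center G) :
    (Finset.univ.filter (fun z : {g : G // g ∉ Subgroup.center G} =>
      x * (z : G) = (z : G) * x)).card = (p - 1) * n := by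
  haveI : Fact p.Prime := ⟨hp⟩
  haveI : NeZero p := ⟨hp.pos.ne'⟩
  have hxq : (x : G ⧸ Subgroup.center G) ≠ 1 := fun h => hx ((pi_eq_one_iff x).mp h)
  rw [← Fintype.card_subtype]
  let F : {k : ZMod p // k ≠ 0} × (Subgroup.center G) →
      {z : {g : G // g ∉ Subgroup.center G} // x * (z : G) = (z : G) * x} := by
    refine fun kc => ⟨⟨x ^ (kc.1 : ZMod p).val * (kc.2 : G), ?_⟩, ?_⟩
    · intro hmem
      apply kc.1.2
      have h1 : ((x ^ (kc.1 : ZMod p).val * (kc.2 : G) : G) : G ⧸ Subgroup.center G) = 1 :=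
        (pi_eq_one_iff _).mpr hmem
      have h2 : ((kc.2 : G) : G ⧸ Subgroup.center G) = 1 := (pi_eq_one_iff _).mpr kc.2.2
      have h3 : ((x : G ⧸ Subgroup.center G)) ^ ((kc.1 : ZMod p).val : ℤ) = 1 := by
        rw [zpow_natCast]
        rw [show ((x ^ (kc.1 : ZMod p).val * (kc.2 : G) : G) : G ⧸ Subgroup.center G)
            = (x : G ⧸ Subgroup.center G) ^ (kc.1 : ZMod p).val
              * ((kc.2 : G) : G ⧸ Subgroup.center G) by rfl, h2, mul_one] at h1
        exact h1
      rw [zpow_eq_one_iff hp e _ hxq] at h3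
      push_cast at h3
      rwa [ZMod.natCast_val, ZMod.cast_id] at h3
    · have hc : Commute x (kc.2 : G) := Subgroup.mem_center_iff.mp kc.2.2 x
      exact (((Commute.refl x).pow_right _).mul_right hc).eq
  have hbij : Function.Bijective F := by
    constructor
    · rintro ⟨⟨k, hk⟩, ⟨c, hc⟩⟩ ⟨⟨k', hk'⟩, ⟨c', hc'⟩⟩ hF
      have heq : x ^ k.val * c = x ^ k'.val * c' := congrArg (fun t => t.1.1) hF
      have hcq : ((c : G) : G ⧸ Subgroup.center G) = 1 := (pi_eq_one_iff _).mpr hc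
      have hcq' : ((c' : G) : G ⧸ Subgroup.center G) = 1 := (pi_eq_one_iff _).mpr hc'
      have hq : (x : G ⧸ Subgroup.center G) ^ ((k.val : ℤ) - k'.val) = 1 := by
        have := congrArg (fun t : G => ((t : G ⧸ Subgroup.center G))) heq
        rw [show ((x ^ k.val * c : G) : G ⧸ Subgroup.center G)
            = (x : G ⧸ Subgroup.center G) ^ k.val * ((c : G) : G ⧸ Subgroup.center G) by rfl,
          show ((x ^ k'.val * c' : G) : G ⧸ Subgroup.center G)
            = (x : G ⧸ Subgroup.center G) ^ k'.val * ((c' : G) : G ⧸ Subgroup.center G) by rfl,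
          hcq, hcq', mul_one, mul_one] at this
        rw [_root_.zpow_sub, zpow_natCast, zpow_natCast, this, mul_inv_cancel]
      rw [zpow_eq_one_iff hp e _ hxq] at hq
      push_cast at hq
      rw [ZMod.natCast_val, ZMod.cast_id, ZMod.natCast_val, ZMod.cast_id, sub_eq_zero] at hq
      have hkk : k = k' := hq
      subst hkk
      have hcc : c = c' := mul_left_cancel heq
      subst hcc
      rfl
    · rintro ⟨⟨z, hznc⟩, hzcomm⟩
      obtain ⟨kk, hkk⟩ := (comm_iff hp e hna x z hx hznc).mp hzcomm
      set k : ZMod p := (kk : ZMod p) with hkdef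
      have hk0 : k ≠ 0 := by
        intro h0
        apply hznc
        apply (pi_eq_one_iff z).mp
        rw [hkk, zpow_eq_one_iff hp e _ hxq, ← hkdef, h0]
      have hcen : (x ^ k.val)⁻¹ * z ∈ Subgroup.center G := by
        apply (pi_eq_one_iff _).mp
        rw [show (((x ^ k.val)⁻¹ * z : G) : G ⧸ Subgroup.center G)
            = ((x : G ⧸ Subgroup.center G) ^ k.val)⁻¹ * (z : G ⧸ Subgroup.center G) by rfl,
          hkk, ← zpow_natCast, ← _root_.zpow_neg, ← _root_.zpow_add]
        rw [zpow_eq_one_iff hp e _ hxq]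
        push_cast
        rw [ZMod.natCast_val, ZMod.cast_id, ← hkdef, neg_add_cancel]
      refine ⟨⟨⟨k, hk0⟩, ⟨(x ^ k.val)⁻¹ * z, hcen⟩⟩, ?_⟩
      apply Subtype.ext
      apply Subtype.ext
      show x ^ k.val * ((x ^ k.val)⁻¹ * z) = z
      group
  rw [← Fintype.card_of_bijective hbij, Fintype.card_prod]
  congr 1
  · rw [Fintype.card_subtype_compl, ZMod.card, Fintype.card_subtype_eq]
  · rw [← Nat.card_eq_fintype_card, hn]


lemma card_V (hp : p.Prime)
    (e : (G ⧸ Subgroup.center G) ≃* Multiplicative (ZMod p × ZMod p))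
    (hn : Nat.card (Subgroup.center G) = n) :
    Fintype.card {g : G // g ∉ Subgroup.center G} = (p ^ 2 - 1) * n := by
  haveI : NeZero p := ⟨hp.pos.ne'⟩
  have hq : Nat.card (G ⧸ Subgroup.center G) = p ^ 2 := by
    rw [Nat.card_congr e.toEquiv]
    simp [Nat.card_eq_fintype_card, ZMod.card, sq]
  have hG : Fintype.card G = p ^ 2 * n := by
    rw [← Nat.card_eq_fintype_card, Subgroup.card_eq_card_quotient_mul_card_subgroup
      (Subgroup.center G), hq, hn]
  rw [Fintype.card_subtype_compl, hG]
  have hc : Fintype.card {g : G // g ∈ Subgroup.center G} = n := by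
    rw [← Nat.card_eq_fintype_card, ← hn]
  rw [hc, Nat.sub_mul, one_mul]

end Counting
end NCaux
end GroupPart


section MatrixPart
variable {G : Type*} [Group G] [Fintype G] [DecidableEq G] {p n : ℕ}

namespace NCaux

lemma nonempty_V (hna : ∃ a b : G, a * b ≠ b * a) :
    Nonempty {g : G // g ∉ Subgroup.center G} := by
  obtain ⟨a, b, hab⟩ := hna
  exact ⟨⟨a, fun h => hab (Subgroup.mem_center_iff.mp h b).symm⟩⟩

lemma degree_eq (hp : p.Prime)
    (e : (G ⧸ Subgroup.center G) ≃* Multiplicative (ZMod p × ZMod p))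
    (hna : ∃ a b : G, a * b ≠ b * a) (hn : Nat.card (Subgroup.center G) = n)
    (x : {g : G // g ∉ Subgroup.center G}) :
    (ncGraph G).degree x = (p ^ 2 - p) * n := by
  rw [← SimpleGraph.card_neighborFinset_eq_degree, SimpleGraph.neighborFinset_eq_filter]
  have hfilt : Finset.univ.filter (fun y => (ncGraph G).Adj x y)
      = Finset.univ \ Finset.univ.filter
        (fun z : {g : G // g ∉ Subgroup.center G} => (x : G) * z = (z : G) * x) := by
    ext z
    simp only [Finset.mem_filter, Finset.mem_sdiff, Finset.mem_univ, true_and, ncGraph]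
    exact Finset.mem_filter.trans (by simp)
  rw [hfilt, Finset.card_sdiff_of_subset (Finset.filter_subset _ _), Finset.card_univ,
    card_V hp e hn, card_commuting hp e hna hn (x : G) x.2]
  have h1 : 1 ≤ p := hp.pos
  have h2 : p ≤ p ^ 2 := Nat.le_self_pow two_ne_zero p
  rw [← Nat.sub_mul]
  congr 1
  generalize p ^ 2 = q at h2 ⊢
  omega

lemma A_mul_A (hp : p.Prime)
    (e : (G ⧸ Subgroup.center G) ≃* Multiplicative (ZMod p × ZMod p))
    (hna : ∃ a b : G, a * b ≠ b * a) (hn : Nat.card (Subgroup.center G) = n)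
    (x y : {g : G // g ∉ Subgroup.center G}) :
    ((ncGraph G).adjMatrix ℝ * (ncGraph G).adjMatrix ℝ) x y
      = (((p ^ 2 - p) * n : ℕ) : ℝ)
        - (((p - 1) * n : ℕ) : ℝ) * (ncGraph G).adjMatrix ℝ x y := by
  have h1 : 1 ≤ p := hp.pos
  have hp2 : 2 ≤ p := hp.two_le
  have h2 : p ≤ p ^ 2 := Nat.le_self_pow two_ne_zero p
  rw [Matrix.mul_apply]
  rw [Finset.sum_congr rfl (fun z _ => by
    by_cases h1 : (ncGraph G).Adj x z <;> by_cases h2 : (ncGraph G).Adj z y <;>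
      simp [h1, h2] :
    ∀ z ∈ Finset.univ, (ncGraph G).adjMatrix ℝ x z * (ncGraph G).adjMatrix ℝ z y
      = if ((ncGraph G).Adj x z ∧ (ncGraph G).Adj z y) then (1:ℝ) else 0)]
  rw [Finset.sum_boole]
  by_cases hxy : (x : G) * y = (y : G) * x
  · have hAxy : (ncGraph G).adjMatrix ℝ x y = 0 := by
      rw [SimpleGraph.adjMatrix_apply]; exact if_neg (fun h => h hxy)
    have hset : Finset.univ.filter
        (fun z : {g : G // g ∉ Subgroup.center G} => (ncGraph G).Adj x z ∧ (ncGraph G).Adj z y)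
        = Finset.univ \ Finset.univ.filter
          (fun z : {g : G // g ∉ Subgroup.center G} => (x : G) * z = (z : G) * x) := by
      ext z
      simp only [Finset.mem_filter, Finset.mem_sdiff, Finset.mem_univ, true_and]
      constructor
      · rintro ⟨hz1, _⟩ hc
        exact hz1 hc
      · intro hz
        refine ⟨fun hc => hz hc, fun hzy : (z : G) * y = (y : G) * z => ?_⟩
        exact hz (comm_trans hp e hna (x : G) (z : G) (y : G) x.2 z.2 y.2 hxy.symm hzy.symm)
    rw [hset, Finset.card_sdiff_of_subset (Finset.filter_subset _ _), Finset.card_univ,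
      card_V hp e hn, card_commuting hp e hna hn (x : G) x.2, hAxy, mul_zero, sub_zero]
    have hnat : (p ^ 2 - 1) * n - (p - 1) * n = (p ^ 2 - p) * n := by
      rw [← Nat.sub_mul]
      congr 1
      generalize p ^ 2 = q at h2 ⊢
      omega
    rw [hnat]
  · have hAxy : (ncGraph G).adjMatrix ℝ x y = 1 := by
      rw [SimpleGraph.adjMatrix_apply]; apply if_pos
      exact hxy
    have hset : Finset.univ.filter
        (fun z : {g : G // g ∉ Subgroup.center G} => (ncGraph G).Adj x z ∧ (ncGraph G).Adj z y)
        = Finset.univ \ Finset.univ.filter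
          (fun z : {g : G // g ∉ Subgroup.center G} =>
            ((x : G) * z = (z : G) * x) ∨ ((y : G) * z = (z : G) * y)) := by
      ext z
      simp only [Finset.mem_filter, Finset.mem_sdiff, Finset.mem_univ, true_and]
      constructor
      · rintro ⟨hz1, hz2⟩ (hc | hc)
        · exact hz1 hc
        · exact hz2 hc.symm
      · intro hz
        exact ⟨fun hc => hz (Or.inl hc), fun hc => hz (Or.inr hc.symm)⟩
    have hdis : Disjoint
        (Finset.univ.filter (fun z : {g : G // g ∉ Subgroup.center G} =>
          (x : G) * z = (z : G) * x))
        (Finset.univ.filter (fun z : {g : G // g ∉ Subgroup.center G} =>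
          (y : G) * z = (z : G) * y)) := by
      rw [Finset.disjoint_left]
      intro z hz1 hz2
      have hP := (Finset.mem_filter.mp hz1).2
      have hQ := (Finset.mem_filter.mp hz2).2
      exact hxy (comm_trans hp e hna (x : G) (y : G) (z : G) x.2 y.2 z.2 hP.symm hQ.symm)
    have hfo : Finset.univ.filter (fun z : {g : G // g ∉ Subgroup.center G} =>
          ((x : G) * z = (z : G) * x) ∨ ((y : G) * z = (z : G) * y))
        = Finset.univ.filter (fun z : {g : G // g ∉ Subgroup.center G} =>
            (x : G) * z = (z : G) * x)
          ∪ Finset.univ.filter (fun z : {g : G // g ∉ Subgroup.center G} =>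
            (y : G) * z = (z : G) * y) := Finset.filter_or _ _ _
    have hcard2 : (Finset.univ.filter (fun z : {g : G // g ∉ Subgroup.center G} =>
          ((x : G) * z = (z : G) * x) ∨ ((y : G) * z = (z : G) * y))).card
        = (p - 1) * n + (p - 1) * n := by
      rw [hfo, Finset.card_union_of_disjoint hdis,
        card_commuting hp e hna hn (x : G) x.2, card_commuting hp e hna hn (y : G) y.2]
    rw [hset, Finset.card_sdiff_of_subset (Finset.filter_subset _ _), Finset.card_univ,
      card_V hp e hn, hcard2, hAxy, mul_one]
    have hq2 : 2 * p ≤ p ^ 2 := by nlinarith [hp.two_le]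
    have hle : (p - 1) * n + (p - 1) * n ≤ (p ^ 2 - 1) * n := by
      have h' : (p - 1) + (p - 1) ≤ p ^ 2 - 1 := by
        generalize p ^ 2 = q at hq2 ⊢
        omega
      calc (p - 1) * n + (p - 1) * n = ((p - 1) + (p - 1)) * n := by ring
        _ ≤ (p ^ 2 - 1) * n := Nat.mul_le_mul_right n h'
    have hone2 : 1 ≤ p ^ 2 := h1.trans h2
    rw [Nat.cast_sub hle]
    push_cast [Nat.cast_sub h1, Nat.cast_sub h2, Nat.cast_sub hone2]
    ring


lemma A_sq (hp : p.Prime)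
    (e : (G ⧸ Subgroup.center G) ≃* Multiplicative (ZMod p × ZMod p))
    (hna : ∃ a b : G, a * b ≠ b * a) (hn : Nat.card (Subgroup.center G) = n) :
    (ncGraph G).adjMatrix ℝ * (ncGraph G).adjMatrix ℝ
      = (((p ^ 2 - p) * n : ℕ) : ℝ) • (Matrix.of fun _ _ => (1:ℝ))
        - (((p - 1) * n : ℕ) : ℝ) • (ncGraph G).adjMatrix ℝ := by
  ext x y
  rw [A_mul_A hp e hna hn x y]
  simp [Matrix.sub_apply, Matrix.smul_apply, smul_eq_mul]

lemma J_mul_A (hp : p.Prime)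
    (e : (G ⧸ Subgroup.center G) ≃* Multiplicative (ZMod p × ZMod p))
    (hna : ∃ a b : G, a * b ≠ b * a) (hn : Nat.card (Subgroup.center G) = n) :
    (Matrix.of fun _ _ => (1:ℝ)) * (ncGraph G).adjMatrix ℝ
      = (((p ^ 2 - p) * n : ℕ) : ℝ) • (Matrix.of fun _ _ => (1:ℝ)) := by
  ext x y
  rw [Matrix.mul_apply]
  simp only [Matrix.of_apply, one_mul, SimpleGraph.adjMatrix_apply]
  rw [Finset.sum_boole]
  have hs : Finset.univ.filter (fun z : {g : G // g ∉ Subgroup.center G} =>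
      (ncGraph G).Adj z y) = Finset.univ.filter (fun z => (ncGraph G).Adj y z) := by
    ext z
    simp [SimpleGraph.adj_comm]
  rw [hs, ← SimpleGraph.neighborFinset_eq_filter, SimpleGraph.card_neighborFinset_eq_degree,
    degree_eq hp e hna hn y]
  simp

lemma A_cube (hp : p.Prime)
    (e : (G ⧸ Subgroup.center G) ≃* Multiplicative (ZMod p × ZMod p))
    (hna : ∃ a b : G, a * b ≠ b * a) (hn : Nat.card (Subgroup.center G) = n) :
    ((ncGraph G).adjMatrix ℝ * (ncGraph G).adjMatrix ℝ) * (ncGraph G).adjMatrix ℝ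
      = ((((p ^ 2 - p) * n : ℕ) : ℝ) - (((p - 1) * n : ℕ) : ℝ))
          • ((ncGraph G).adjMatrix ℝ * (ncGraph G).adjMatrix ℝ)
        + ((((p - 1) * n : ℕ) : ℝ) * (((p ^ 2 - p) * n : ℕ) : ℝ)) • (ncGraph G).adjMatrix ℝ := by
  have hJ : (((p ^ 2 - p) * n : ℕ) : ℝ) • (Matrix.of fun _ _ => (1:ℝ))
      = (ncGraph G).adjMatrix ℝ * (ncGraph G).adjMatrix ℝ
        + (((p - 1) * n : ℕ) : ℝ) • (ncGraph G).adjMatrix ℝ := by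
    rw [A_sq hp e hna hn]; module
  calc ((ncGraph G).adjMatrix ℝ * (ncGraph G).adjMatrix ℝ) * (ncGraph G).adjMatrix ℝ
      = ((((p ^ 2 - p) * n : ℕ) : ℝ) • (Matrix.of fun _ _ => (1:ℝ))
          - (((p - 1) * n : ℕ) : ℝ) • (ncGraph G).adjMatrix ℝ) * (ncGraph G).adjMatrix ℝ := by
        rw [A_sq hp e hna hn]
    _ = (((p ^ 2 - p) * n : ℕ) : ℝ) • ((Matrix.of fun _ _ => (1:ℝ)) * (ncGraph G).adjMatrix ℝ)
          - (((p - 1) * n : ℕ) : ℝ) • ((ncGraph G).adjMatrix ℝ * (ncGraph G).adjMatrix ℝ) := by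
        rw [Matrix.sub_mul, Matrix.smul_mul, Matrix.smul_mul]
    _ = (((p ^ 2 - p) * n : ℕ) : ℝ) • ((ncGraph G).adjMatrix ℝ * (ncGraph G).adjMatrix ℝ
            + (((p - 1) * n : ℕ) : ℝ) • (ncGraph G).adjMatrix ℝ)
          - (((p - 1) * n : ℕ) : ℝ) • ((ncGraph G).adjMatrix ℝ * (ncGraph G).adjMatrix ℝ) := by
        rw [J_mul_A hp e hna hn, hJ]
    _ = _ := by module

lemma cube_expand {W : Type*} [Fintype W] [DecidableEq W] (M : Matrix W W ℝ) (α β γ : ℝ) :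
    (M - α • 1) * ((M - β • 1) * (M - γ • 1))
      = (M * M) * M - (α + β + γ) • (M * M) + (α * β + α * γ + β * γ) • M
        - (α * β * γ) • (1 : Matrix W W ℝ) := by
  simp only [Matrix.sub_mul, Matrix.mul_sub, Matrix.smul_mul, Matrix.mul_smul, smul_smul,
    Matrix.mul_one, Matrix.one_mul, ← Matrix.mul_assoc]
  module

lemma annA (hp : p.Prime)
    (e : (G ⧸ Subgroup.center G) ≃* Multiplicative (ZMod p × ZMod p))
    (hna : ∃ a b : G, a * b ≠ b * a) (hn : Nat.card (Subgroup.center G) = n)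
    (α β γ : ℝ)
    (hs : α + β + γ = (((p ^ 2 - p) * n : ℕ) : ℝ) - (((p - 1) * n : ℕ) : ℝ))
    (hpr : α * β + α * γ + β * γ = -((((p - 1) * n : ℕ) : ℝ) * (((p ^ 2 - p) * n : ℕ) : ℝ)))
    (hz : α * β * γ = 0) :
    ((ncGraph G).adjMatrix ℝ - α • 1) * (((ncGraph G).adjMatrix ℝ - β • 1)
      * ((ncGraph G).adjMatrix ℝ - γ • 1)) = 0 := by
  rw [cube_expand, A_cube hp e hna hn, hs, hpr, hz]
  module

lemma symm_to_herm {W : Type*} [Fintype W] {M : Matrix W W ℝ} (h : M.IsSymm) :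
    M.IsHermitian := by
  ext i j
  rw [Matrix.conjTranspose_apply, star_trivial]
  exact congrFun (congrFun h i) j

lemma Q_form (hp : p.Prime)
    (e : (G ⧸ Subgroup.center G) ≃* Multiplicative (ZMod p × ZMod p))
    (hna : ∃ a b : G, a * b ≠ b * a) (hn : Nat.card (Subgroup.center G) = n) :
    signlessLap (ncGraph G)
      = (ncGraph G).adjMatrix ℝ + (((p ^ 2 - p) * n : ℕ) : ℝ) • 1 := by
  rw [signlessLap, add_comm]
  congr 1
  ext i j
  by_cases h : i = j
  · subst h
    simp [Matrix.diagonal, degree_eq hp e hna hn i, Matrix.one_apply]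
  · simp [Matrix.diagonal_apply_ne _ h, Matrix.one_apply_ne h]

lemma L_form (hp : p.Prime)
    (e : (G ⧸ Subgroup.center G) ≃* Multiplicative (ZMod p × ZMod p))
    (hna : ∃ a b : G, a * b ≠ b * a) (hn : Nat.card (Subgroup.center G) = n) :
    (ncGraph G).lapMatrix ℝ
      = (((p ^ 2 - p) * n : ℕ) : ℝ) • 1 - (ncGraph G).adjMatrix ℝ := by
  rw [SimpleGraph.lapMatrix]
  congr 1
  ext i j
  by_cases h : i = j
  · subst h
    simp [SimpleGraph.degMatrix, Matrix.diagonal, degree_eq hp e hna hn i, Matrix.one_apply]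
  · simp [SimpleGraph.degMatrix, Matrix.diagonal_apply_ne _ h, Matrix.one_apply_ne h]

lemma trace_A : ((ncGraph G).adjMatrix ℝ).trace = 0 := by
  simp [Matrix.trace, Matrix.diag]

lemma trace_A2 (hp : p.Prime)
    (e : (G ⧸ Subgroup.center G) ≃* Multiplicative (ZMod p × ZMod p))
    (hna : ∃ a b : G, a * b ≠ b * a) (hn : Nat.card (Subgroup.center G) = n) :
    ((ncGraph G).adjMatrix ℝ * (ncGraph G).adjMatrix ℝ).trace
      = (Fintype.card {g : G // g ∉ Subgroup.center G} : ℝ) * (((p ^ 2 - p) * n : ℕ) : ℝ) := by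
  rw [Matrix.trace]
  rw [Finset.sum_congr rfl (fun x _ => by
    rw [Matrix.diag_apply, A_mul_A hp e hna hn x x]
    simp :
    ∀ x ∈ Finset.univ, ((ncGraph G).adjMatrix ℝ * (ncGraph G).adjMatrix ℝ).diag x
      = (((p ^ 2 - p) * n : ℕ) : ℝ))]
  rw [Finset.sum_const, nsmul_eq_mul, Finset.card_univ]

lemma avg_deg (hp : p.Prime)
    (e : (G ⧸ Subgroup.center G) ≃* Multiplicative (ZMod p × ZMod p))
    (hna : ∃ a b : G, a * b ≠ b * a) (hn : Nat.card (Subgroup.center G) = n) :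
    avgDeg (ncGraph G) = (((p ^ 2 - p) * n : ℕ) : ℝ) := by
  haveI := nonempty_V hna
  have hpos : 0 < (Fintype.card {g : G // g ∉ Subgroup.center G} : ℝ) := by
    exact_mod_cast Fintype.card_pos
  rw [avgDeg]
  rw [show ((2:ℝ) * ((ncGraph G).edgeFinset.card : ℝ))
      = ((2 * (ncGraph G).edgeFinset.card : ℕ) : ℝ) by push_cast; ring]
  rw [← SimpleGraph.sum_degrees_eq_twice_card_edges, Nat.cast_sum]
  rw [Finset.sum_congr rfl (fun x _ => by rw [degree_eq hp e hna hn x] :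
    ∀ x ∈ Finset.univ, (((ncGraph G).degree x : ℕ) : ℝ) = (((p ^ 2 - p) * n : ℕ) : ℝ))]
  rw [Finset.sum_const, nsmul_eq_mul, Finset.card_univ]
  rw [mul_div_cancel_left₀ _ hpos.ne']

end NCaux
end MatrixPart

set_option maxHeartbeats 8000000 in
/-- **The non-commuting graph of a group `G` with `G/Z(G) ≅ ℤ_p × ℤ_p` and `|Z(G)| = n`.**
Its signless Laplacian characteristic polynomial is
`(x - pn(p-1))^((p²-1)n-(p+1)) (x - n(p-1)²)^p (x - 2pn(p-1))`, and
`E = LE = LE⁺ = 2p(p-1)n`, with `v < E < 2v - 2`; in particular the graph is neither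
hypoenergetic, hyperenergetic, L-hyperenergetic nor Q-hyperenergetic. -/
theorem stmt_17 (p n : ℕ) (hp : p.Prime) (G : Type*) [Group G] [Fintype G] [DecidableEq G]
    (hna : ∃ a b : G, a * b ≠ b * a)
    (e : (G ⧸ Subgroup.center G) ≃* Multiplicative (ZMod p × ZMod p))
    (hn : Nat.card (Subgroup.center G) = n) :
    Fintype.card {g : G // g ∉ Subgroup.center G} = (p ^ 2 - 1) * n ∧
    (signlessLap (ncGraph G)).charpoly =
      (X - C ((p : ℝ) * (n : ℝ) * ((p : ℝ) - 1))) ^ ((p ^ 2 - 1) * n - (p + 1)) *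
        (X - C ((n : ℝ) * ((p : ℝ) - 1) ^ 2)) ^ p *
        (X - C (2 * (p : ℝ) * (n : ℝ) * ((p : ℝ) - 1))) ∧
    graphEnergy (ncGraph G) = 2 * (p : ℝ) * ((p : ℝ) - 1) * (n : ℝ) ∧
    lapEnergy (ncGraph G) = 2 * (p : ℝ) * ((p : ℝ) - 1) * (n : ℝ) ∧
    slapEnergy (ncGraph G) = 2 * (p : ℝ) * ((p : ℝ) - 1) * (n : ℝ) ∧
    ((Fintype.card {g : G // g ∉ Subgroup.center G} : ℝ) < graphEnergy (ncGraph G) ∧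
      graphEnergy (ncGraph G) <
        2 * (Fintype.card {g : G // g ∉ Subgroup.center G} : ℝ) - 2) ∧
    ¬(graphEnergy (ncGraph G) < (Fintype.card {g : G // g ∉ Subgroup.center G} : ℝ)) ∧
    ¬(graphEnergy (ncGraph G) >
        2 * (Fintype.card {g : G // g ∉ Subgroup.center G} : ℝ) - 2) ∧
    ¬(lapEnergy (ncGraph G) >
        2 * (Fintype.card {g : G // g ∉ Subgroup.center G} : ℝ) - 2) ∧
    ¬(slapEnergy (ncGraph G) >
        2 * (Fintype.card {g : G // g ∉ Subgroup.center G} : ℝ) - 2) := by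
  classical
  have hp2 : 2 ≤ p := hp.two_le
  have hn2 : 2 ≤ n := NCaux.two_le_n e hna hn
  have h1p : 1 ≤ p := hp.pos
  have hpp : p ≤ p ^ 2 := Nat.le_self_pow two_ne_zero p
  have hone2 : 1 ≤ p ^ 2 := h1p.trans hpp
  have hX : (2:ℝ) ≤ (p:ℝ) := by exact_mod_cast hp2
  have hN : (2:ℝ) ≤ (n:ℝ) := by exact_mod_cast hn2
  have hcardV : Fintype.card {g : G // g ∉ Subgroup.center G} = (p ^ 2 - 1) * n :=
    NCaux.card_V hp e hn
  have ha : (((p - 1) * n : ℕ) : ℝ) = ((p:ℝ) - 1) * (n:ℝ) := by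
    rw [Nat.cast_mul, Nat.cast_sub h1p, Nat.cast_one]
  have hdd : (((p ^ 2 - p) * n : ℕ) : ℝ) = (p:ℝ) * (n:ℝ) * ((p:ℝ) - 1) := by
    rw [Nat.cast_mul, Nat.cast_sub hpp, Nat.cast_pow]; ring
  have hv : (((p ^ 2 - 1) * n : ℕ) : ℝ) = ((p:ℝ)^2 - 1) * (n:ℝ) := by
    rw [Nat.cast_mul, Nat.cast_sub hone2, Nat.cast_pow, Nat.cast_one]
  have hvC : (Fintype.card {g : G // g ∉ Subgroup.center G} : ℝ) = ((p:ℝ)^2 - 1) * (n:ℝ) := by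
    rw [hcardV, hv]
  have hq2 : 2 * p ≤ p ^ 2 := by nlinarith [hp2]
  have hm1le : p + 1 ≤ (p ^ 2 - 1) * n := by
    have h' : p + 1 ≤ p ^ 2 - 1 := by
      generalize p ^ 2 = q at hq2 ⊢
      omega
    calc p + 1 ≤ (p ^ 2 - 1) * 1 := by rwa [mul_one]
      _ ≤ (p ^ 2 - 1) * n := Nat.mul_le_mul_left _ (by omega)
  have hsum : ((p ^ 2 - 1) * n - (p + 1)) + p + 1 = Fintype.card {g : G // g ∉ Subgroup.center G} := by
    rw [hcardV]
    generalize (p ^ 2 - 1) * n = w at hm1le ⊢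
    omega
  have hm1cast : ((((p ^ 2 - 1) * n - (p + 1)) : ℕ) : ℝ) = ((p:ℝ)^2 - 1) * (n:ℝ) - ((p:ℝ) + 1) := by
    rw [Nat.cast_sub hm1le, hv]; push_cast; ring
  -- Hermitian
  have hermA : ((ncGraph G).adjMatrix ℝ).IsHermitian :=
    NCaux.symm_to_herm (SimpleGraph.isSymm_adjMatrix _)
  have hermL : ((ncGraph G).lapMatrix ℝ).IsHermitian :=
    NCaux.symm_to_herm (SimpleGraph.isSymm_lapMatrix ℝ _)
  have hermQ : (signlessLap (ncGraph G)).IsHermitian := by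
    rw [NCaux.Q_form hp e hna hn]
    exact hermA.add (NCaux.symm_to_herm
      (by rw [Matrix.IsSymm, Matrix.transpose_smul, Matrix.transpose_one]))
  -- positivity facts
  have hapos : (0:ℝ) < (n:ℝ) * ((p:ℝ) - 1) := by nlinarith
  have hddpos : (0:ℝ) < (p:ℝ) * (n:ℝ) * ((p:ℝ) - 1) := by nlinarith
  -- trace helpers
  have htrA2 := NCaux.trace_A2 hp e hna hn
  have htrA := NCaux.trace_A (G := G)
  have hAA : ((ncGraph G).adjMatrix ℝ * (ncGraph G).adjMatrix ℝ).trace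
      = (((p:ℝ)^2 - 1) * (n:ℝ)) * ((p:ℝ) * (n:ℝ) * ((p:ℝ) - 1)) := by
    rw [htrA2, hvC, hdd]
  have htrone : (1 : Matrix {g : G // g ∉ Subgroup.center G}
      {g : G // g ∉ Subgroup.center G} ℝ).trace = (((p:ℝ)^2 - 1) * (n:ℝ)) := by
    rw [Matrix.trace_one, hvC]
  -- === Q ===
  have hannQ : (signlessLap (ncGraph G) - ((p:ℝ) * (n:ℝ) * ((p:ℝ) - 1)) • 1)
      * ((signlessLap (ncGraph G) - ((n:ℝ) * ((p:ℝ) - 1)^2) • 1)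
        * (signlessLap (ncGraph G) - (2 * (p:ℝ) * (n:ℝ) * ((p:ℝ) - 1)) • 1)) = 0 := by
    rw [NCaux.Q_form hp e hna hn]
    have hshift : ∀ r : ℝ, (ncGraph G).adjMatrix ℝ + (((p ^ 2 - p) * n : ℕ) : ℝ) • 1 - r • 1
        = (ncGraph G).adjMatrix ℝ - (r - (((p ^ 2 - p) * n : ℕ) : ℝ)) • 1 := fun r => by
      module
    rw [hshift, hshift, hshift]
    apply NCaux.annA hp e hna hn
    · rw [ha, hdd]; ring
    · rw [ha, hdd]; ring
    · rw [hdd]; ring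
  have hexpQ : (((ncGraph G).adjMatrix ℝ + (((p ^ 2 - p) * n : ℕ) : ℝ) • 1)
      * ((ncGraph G).adjMatrix ℝ + (((p ^ 2 - p) * n : ℕ) : ℝ) • 1))
      = (ncGraph G).adjMatrix ℝ * (ncGraph G).adjMatrix ℝ
        + (2 * (((p ^ 2 - p) * n : ℕ) : ℝ)) • (ncGraph G).adjMatrix ℝ
        + ((((p ^ 2 - p) * n : ℕ) : ℝ) * (((p ^ 2 - p) * n : ℕ) : ℝ)) • 1 := by
    simp only [Matrix.add_mul, Matrix.mul_add, Matrix.smul_mul, Matrix.mul_smul, smul_smul,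
      Matrix.mul_one, Matrix.one_mul]
    module
  have htQ1 : (signlessLap (ncGraph G)).trace
      = ((((p ^ 2 - 1) * n - (p + 1)) : ℕ) : ℝ) * ((p:ℝ) * (n:ℝ) * ((p:ℝ) - 1))
        + (p : ℝ) * ((n:ℝ) * ((p:ℝ) - 1)^2)
        + ((1:ℕ) : ℝ) * (2 * (p:ℝ) * (n:ℝ) * ((p:ℝ) - 1)) := by
    rw [NCaux.Q_form hp e hna hn, Matrix.trace_add, Matrix.trace_smul, htrA, htrone,
      hm1cast, hdd]
    simp only [smul_eq_mul]
    push_cast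
    ring
  have htQ2 : (signlessLap (ncGraph G) * signlessLap (ncGraph G)).trace
      = ((((p ^ 2 - 1) * n - (p + 1)) : ℕ) : ℝ) * ((p:ℝ) * (n:ℝ) * ((p:ℝ) - 1))^2
        + (p : ℝ) * ((n:ℝ) * ((p:ℝ) - 1)^2)^2
        + ((1:ℕ) : ℝ) * (2 * (p:ℝ) * (n:ℝ) * ((p:ℝ) - 1))^2 := by
    rw [NCaux.Q_form hp e hna hn, hexpQ, Matrix.trace_add, Matrix.trace_add,
      Matrix.trace_smul, Matrix.trace_smul, htrA, hAA, htrone, hm1cast, hdd]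
    simp only [smul_eq_mul]
    push_cast
    ring
  have hQ12 : (p:ℝ) * (n:ℝ) * ((p:ℝ) - 1) ≠ (n:ℝ) * ((p:ℝ) - 1)^2 := by
    intro h; nlinarith
  have hQ13 : (p:ℝ) * (n:ℝ) * ((p:ℝ) - 1) ≠ 2 * (p:ℝ) * (n:ℝ) * ((p:ℝ) - 1) := by
    intro h; nlinarith
  have hQ23 : (n:ℝ) * ((p:ℝ) - 1)^2 ≠ 2 * (p:ℝ) * (n:ℝ) * ((p:ℝ) - 1) := by
    intro h; nlinarith
  obtain ⟨hcpQ, habsQ⟩ := herm_main (signlessLap (ncGraph G)) hermQ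
    ((p:ℝ) * (n:ℝ) * ((p:ℝ) - 1)) ((n:ℝ) * ((p:ℝ) - 1)^2) (2 * (p:ℝ) * (n:ℝ) * ((p:ℝ) - 1))
    hQ12 hQ13 hQ23 hannQ ((p ^ 2 - 1) * n - (p + 1)) p 1 hsum htQ1 htQ2
  -- === A ===
  have hannA : ((ncGraph G).adjMatrix ℝ - (0:ℝ) • 1)
      * (((ncGraph G).adjMatrix ℝ - (-((n:ℝ) * ((p:ℝ) - 1))) • 1)
        * ((ncGraph G).adjMatrix ℝ - ((p:ℝ) * (n:ℝ) * ((p:ℝ) - 1)) • 1)) = 0 := by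
    apply NCaux.annA hp e hna hn
    · rw [ha, hdd]; ring
    · rw [ha, hdd]; ring
    · ring
  have htA1 : ((ncGraph G).adjMatrix ℝ).trace
      = ((((p ^ 2 - 1) * n - (p + 1)) : ℕ) : ℝ) * 0
        + (p : ℝ) * (-((n:ℝ) * ((p:ℝ) - 1)))
        + ((1:ℕ) : ℝ) * ((p:ℝ) * (n:ℝ) * ((p:ℝ) - 1)) := by
    rw [htrA]; push_cast; ring
  have htA2 : ((ncGraph G).adjMatrix ℝ * (ncGraph G).adjMatrix ℝ).trace
      = ((((p ^ 2 - 1) * n - (p + 1)) : ℕ) : ℝ) * 0^2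
        + (p : ℝ) * (-((n:ℝ) * ((p:ℝ) - 1)))^2
        + ((1:ℕ) : ℝ) * ((p:ℝ) * (n:ℝ) * ((p:ℝ) - 1))^2 := by
    rw [hAA]; push_cast; ring
  have hA12 : (0:ℝ) ≠ -((n:ℝ) * ((p:ℝ) - 1)) := by intro h; nlinarith
  have hA13 : (0:ℝ) ≠ (p:ℝ) * (n:ℝ) * ((p:ℝ) - 1) := by intro h; nlinarith
  have hA23 : -((n:ℝ) * ((p:ℝ) - 1)) ≠ (p:ℝ) * (n:ℝ) * ((p:ℝ) - 1) := by intro h; nlinarith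
  obtain ⟨hcpA, habsA⟩ := herm_main ((ncGraph G).adjMatrix ℝ) hermA
    0 (-((n:ℝ) * ((p:ℝ) - 1))) ((p:ℝ) * (n:ℝ) * ((p:ℝ) - 1))
    hA12 hA13 hA23 hannA ((p ^ 2 - 1) * n - (p + 1)) p 1 hsum htA1 htA2
  -- === L ===
  have hannL : ((ncGraph G).lapMatrix ℝ - ((p:ℝ) * (n:ℝ) * ((p:ℝ) - 1)) • 1)
      * (((ncGraph G).lapMatrix ℝ - ((p:ℝ) * (n:ℝ) * ((p:ℝ) - 1) + (n:ℝ) * ((p:ℝ) - 1)) • 1)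
        * ((ncGraph G).lapMatrix ℝ - (0:ℝ) • 1)) = 0 := by
    rw [NCaux.L_form hp e hna hn]
    have hshift : ∀ r : ℝ, (((p ^ 2 - p) * n : ℕ) : ℝ) • 1 - (ncGraph G).adjMatrix ℝ - r • 1
        = -((ncGraph G).adjMatrix ℝ - ((((p ^ 2 - p) * n : ℕ) : ℝ) - r) • 1) := fun r => by
      module
    rw [hshift, hshift, hshift, neg_mul_neg, neg_mul]
    rw [NCaux.annA hp e hna hn _ _ _ ?_ ?_ ?_, neg_zero]
    · rw [ha, hdd]; ring
    · rw [ha, hdd]; ring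
    · rw [hdd]; ring
  have hexpL : (((((p ^ 2 - p) * n : ℕ) : ℝ) • 1 - (ncGraph G).adjMatrix ℝ)
      * ((((p ^ 2 - p) * n : ℕ) : ℝ) • 1 - (ncGraph G).adjMatrix ℝ))
      = (ncGraph G).adjMatrix ℝ * (ncGraph G).adjMatrix ℝ
        - (2 * (((p ^ 2 - p) * n : ℕ) : ℝ)) • (ncGraph G).adjMatrix ℝ
        + ((((p ^ 2 - p) * n : ℕ) : ℝ) * (((p ^ 2 - p) * n : ℕ) : ℝ)) • 1 := by
    simp only [Matrix.sub_mul, Matrix.mul_sub, Matrix.smul_mul, Matrix.mul_smul, smul_smul,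
      Matrix.mul_one, Matrix.one_mul]
    module
  have htL1 : ((ncGraph G).lapMatrix ℝ).trace
      = ((((p ^ 2 - 1) * n - (p + 1)) : ℕ) : ℝ) * ((p:ℝ) * (n:ℝ) * ((p:ℝ) - 1))
        + (p : ℝ) * ((p:ℝ) * (n:ℝ) * ((p:ℝ) - 1) + (n:ℝ) * ((p:ℝ) - 1))
        + ((1:ℕ) : ℝ) * 0 := by
    rw [NCaux.L_form hp e hna hn, Matrix.trace_sub, Matrix.trace_smul, htrA, htrone,
      hm1cast, hdd]
    simp only [smul_eq_mul]
    push_cast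
    ring
  have htL2 : ((ncGraph G).lapMatrix ℝ * (ncGraph G).lapMatrix ℝ).trace
      = ((((p ^ 2 - 1) * n - (p + 1)) : ℕ) : ℝ) * ((p:ℝ) * (n:ℝ) * ((p:ℝ) - 1))^2
        + (p : ℝ) * ((p:ℝ) * (n:ℝ) * ((p:ℝ) - 1) + (n:ℝ) * ((p:ℝ) - 1))^2
        + ((1:ℕ) : ℝ) * 0^2 := by
    rw [NCaux.L_form hp e hna hn, hexpL, Matrix.trace_add, Matrix.trace_sub,
      Matrix.trace_smul, Matrix.trace_smul, htrA, hAA, htrone, hm1cast, hdd]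
    simp only [smul_eq_mul]
    push_cast
    ring
  have hL12 : (p:ℝ) * (n:ℝ) * ((p:ℝ) - 1)
      ≠ (p:ℝ) * (n:ℝ) * ((p:ℝ) - 1) + (n:ℝ) * ((p:ℝ) - 1) := by intro h; nlinarith
  have hL13 : (p:ℝ) * (n:ℝ) * ((p:ℝ) - 1) ≠ 0 := by intro h; nlinarith
  have hL23 : (p:ℝ) * (n:ℝ) * ((p:ℝ) - 1) + (n:ℝ) * ((p:ℝ) - 1) ≠ 0 := by intro h; nlinarith
  obtain ⟨hcpL, habsL⟩ := herm_main ((ncGraph G).lapMatrix ℝ) hermL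
    ((p:ℝ) * (n:ℝ) * ((p:ℝ) - 1)) ((p:ℝ) * (n:ℝ) * ((p:ℝ) - 1) + (n:ℝ) * ((p:ℝ) - 1)) 0
    hL12 hL13 hL23 hannL ((p ^ 2 - 1) * n - (p + 1)) p 1 hsum htL1 htL2
  -- energies
  have hEA : graphEnergy (ncGraph G) = 2 * (p:ℝ) * ((p:ℝ) - 1) * (n:ℝ) := by
    rw [graphEnergy, eigAbsSum, dif_pos hermA, habsA 0]
    rw [show |(0:ℝ) - 0| = 0 by simp,
      show |(-((n:ℝ) * ((p:ℝ) - 1))) - 0| = (n:ℝ) * ((p:ℝ) - 1) by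
        rw [sub_zero, abs_neg, abs_of_nonneg hapos.le],
      show |(p:ℝ) * (n:ℝ) * ((p:ℝ) - 1) - 0| = (p:ℝ) * (n:ℝ) * ((p:ℝ) - 1) by
        rw [sub_zero, abs_of_nonneg hddpos.le]]
    push_cast
    ring
  have havg : avgDeg (ncGraph G) = (p:ℝ) * (n:ℝ) * ((p:ℝ) - 1) := by
    rw [NCaux.avg_deg hp e hna hn, hdd]
  have hEL : lapEnergy (ncGraph G) = 2 * (p:ℝ) * ((p:ℝ) - 1) * (n:ℝ) := by
    rw [lapEnergy, eigAbsSum, dif_pos hermL, havg, habsL ((p:ℝ) * (n:ℝ) * ((p:ℝ) - 1))]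
    rw [show |(p:ℝ) * (n:ℝ) * ((p:ℝ) - 1) - (p:ℝ) * (n:ℝ) * ((p:ℝ) - 1)| = 0 by simp,
      show |((p:ℝ) * (n:ℝ) * ((p:ℝ) - 1) + (n:ℝ) * ((p:ℝ) - 1))
          - (p:ℝ) * (n:ℝ) * ((p:ℝ) - 1)| = (n:ℝ) * ((p:ℝ) - 1) by
        rw [add_sub_cancel_left, abs_of_nonneg hapos.le],
      show |(0:ℝ) - (p:ℝ) * (n:ℝ) * ((p:ℝ) - 1)| = (p:ℝ) * (n:ℝ) * ((p:ℝ) - 1) by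
        rw [zero_sub, abs_neg, abs_of_nonneg hddpos.le]]
    push_cast
    ring
  have hEQ : slapEnergy (ncGraph G) = 2 * (p:ℝ) * ((p:ℝ) - 1) * (n:ℝ) := by
    rw [slapEnergy, eigAbsSum, dif_pos hermQ, havg, habsQ ((p:ℝ) * (n:ℝ) * ((p:ℝ) - 1))]
    rw [show |(p:ℝ) * (n:ℝ) * ((p:ℝ) - 1) - (p:ℝ) * (n:ℝ) * ((p:ℝ) - 1)| = 0 by simp,
      show |(n:ℝ) * ((p:ℝ) - 1)^2 - (p:ℝ) * (n:ℝ) * ((p:ℝ) - 1)| = (n:ℝ) * ((p:ℝ) - 1) by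
        rw [show (n:ℝ) * ((p:ℝ) - 1)^2 - (p:ℝ) * (n:ℝ) * ((p:ℝ) - 1)
            = -((n:ℝ) * ((p:ℝ) - 1)) by ring, abs_neg, abs_of_nonneg hapos.le],
      show |2 * (p:ℝ) * (n:ℝ) * ((p:ℝ) - 1) - (p:ℝ) * (n:ℝ) * ((p:ℝ) - 1)|
          = (p:ℝ) * (n:ℝ) * ((p:ℝ) - 1) by
        rw [show 2 * (p:ℝ) * (n:ℝ) * ((p:ℝ) - 1) - (p:ℝ) * (n:ℝ) * ((p:ℝ) - 1)
            = (p:ℝ) * (n:ℝ) * ((p:ℝ) - 1) by ring, abs_of_nonneg hddpos.le]]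
    push_cast
    ring
  have hlt1 : (Fintype.card {g : G // g ∉ Subgroup.center G} : ℝ) < graphEnergy (ncGraph G) := by
    rw [hEA, hvC]; nlinarith
  have hlt2 : graphEnergy (ncGraph G)
      < 2 * (Fintype.card {g : G // g ∉ Subgroup.center G} : ℝ) - 2 := by
    rw [hEA, hvC]; nlinarith
  refine ⟨hcardV, ?_, hEA, hEL, hEQ, ⟨hlt1, hlt2⟩, by linarith, by
    simp only [gt_iff_lt, not_lt]; linarith, by
    rw [hEL]; simp only [gt_iff_lt, not_lt]; rw [hEA] at hlt2; linarith, by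
    rw [hEQ]; simp only [gt_iff_lt, not_lt]; rw [hEA] at hlt2; linarith⟩
  rw [hcpQ, pow_one]
end
end
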